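/- arXiv:1509.05614 — 9 statements merged into one kernel-verified Lean document; each statement's English description precedes it below -/
import Mathlib

section
/- For any solution x̂ of (P), the entry x̂_{σ(1)} satisfies 0 ≤ x̂_{σ(1)} ≤ min{u_{σ(1)}, m − M₁}, where m := min_{i ≥ σ(1)} b_i and M₁ := max{0, max_{i<σ(1)} a_i}. -/
open Finset

/-- Feasible point of the storage linear program (P). -/
def feasible (n : ℕ) (a b u x : Fin n → ℝ) : Prop :=
  (∀ i, 0 ≤ x i ∧ x i ≤ u i) ∧
  ∀ i, a i ≤ ∑ j ∈ Finset.Iic i, x j ∧ ∑ j ∈ Finset.Iic i, x j ≤ b i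

/-- Solution (minimizer) of the storage linear program (P) with costs `c`. -/
def isSolution (n : ℕ) (a b c u x : Fin n → ℝ) : Prop :=
  feasible n a b u x ∧
  ∀ y, feasible n a b u y → ∑ i, c i * x i ≤ ∑ i, c i * y i

theorem first_entry_bounds
    (n : ℕ) (hn : 0 < n) (a b c u : Fin n → ℝ)
    (hu : ∀ i, 0 ≤ u i) (hab : ∀ i, a i ≤ b i)
    (σ : Equiv.Perm (Fin n)) (hσ : Monotone fun j => c (σ j))
    (xhat : Fin n → ℝ) (hxhat : isSolution n a b c u xhat)
    (k : Fin n) (hk : k = σ ⟨0, hn⟩)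
    (M₁ m : ℝ)
    (hM₁ : M₁ = (insert (0 : ℝ) ((Finset.Iio k).image a)).max'
      (Finset.insert_nonempty _ _))
    (hm : m = ((Finset.Ici k).image b).min' (Finset.nonempty_Ici.image b)) :
    0 ≤ xhat k ∧ xhat k ≤ min (u k) (m - M₁) := by
  obtain ⟨⟨hbox, hsum⟩, _⟩ := hxhat
  refine ⟨(hbox k).1, le_min (hbox k).2 ?_⟩
  -- obtain i ≥ k with b i = m
  have hmmem : m ∈ (Finset.Ici k).image b := hm ▸ Finset.min'_mem _ _
  obtain ⟨i, hik, hbi⟩ := Finset.mem_image.mp hmmem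
  have hik' : k ≤ i := Finset.mem_Ici.mp hik
  -- S := sum over Iio k
  set S : ℝ := ∑ j ∈ Finset.Iio k, xhat j with hS
  have hSM : M₁ ≤ S := by
    have hMmem : M₁ ∈ insert (0 : ℝ) ((Finset.Iio k).image a) :=
      hM₁ ▸ Finset.max'_mem _ _
    rcases Finset.mem_insert.mp hMmem with h0 | hmem
    · exact h0 ▸ Finset.sum_nonneg fun j _ => (hbox j).1
    · obtain ⟨j, hjk, haj⟩ := Finset.mem_image.mp hmem
      have hjk' : j < k := Finset.mem_Iio.mp hjk
      calc M₁ = a j := haj.symm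
        _ ≤ ∑ l ∈ Finset.Iic j, xhat l := (hsum j).1
        _ ≤ S := Finset.sum_le_sum_of_subset_of_nonneg
            (fun l hl => Finset.mem_Iio.mpr (lt_of_le_of_lt (Finset.mem_Iic.mp hl) hjk'))
            (fun l _ _ => (hbox l).1)
  have hkey : xhat k + S ≤ m := by
    have h1 : xhat k + S = ∑ l ∈ Finset.Iic k, xhat l := by
      rw [← Finset.Iio_insert, Finset.sum_insert (by simp)]
    calc xhat k + S = ∑ l ∈ Finset.Iic k, xhat l := h1
      _ ≤ ∑ l ∈ Finset.Iic i, xhat l := Finset.sum_le_sum_of_subset_of_nonneg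
          (Finset.Iic_subset_Iic.mpr hik') (fun l _ _ => (hbox l).1)
      _ ≤ b i := (hsum i).2
      _ = m := hbi
  linarith
end

section
/- Suppose all c_i are pairwise distinct and nonzero. If x̂ is a solution of (P) with x̂_{σ(1)} < min{u_{σ(1)}, m − M₁}, then ∑_{j=1}^{σ(1)-1} x̂_j = M₁, where M₁ := max{0, max_{i<σ(1)} a_i} and m := min_{i≥σ(1)} b_i. -/
open Finset

theorem strict_partial_sum_eq_M1
    (n : ℕ) (hn : 0 < n) (a b c u : Fin n → ℝ)
    (hu : ∀ i, 0 ≤ u i) (hab : ∀ i, a i ≤ b i)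
    (hcinj : Function.Injective c) (hc0 : ∀ i, c i ≠ 0)
    (σ : Equiv.Perm (Fin n)) (hσ : StrictMono fun j => c (σ j))
    (xhat : Fin n → ℝ) (hxhat : isSolution n a b c u xhat)
    (k : Fin n) (hk : k = σ ⟨0, hn⟩)
    (M₁ m : ℝ)
    (hM₁ : M₁ = (insert (0 : ℝ) ((Finset.Iio k).image a)).max'
      (Finset.insert_nonempty _ _))
    (hm : m = ((Finset.Ici k).image b).min' (Finset.nonempty_Ici.image b))
    (hlt : xhat k < min (u k) (m - M₁)) :
    ∑ j ∈ Finset.Iio k, xhat j = M₁ := by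
  obtain ⟨⟨hbox, hps⟩, hopt⟩ := hxhat
  set S := ∑ j ∈ Finset.Iio k, xhat j with hS
  have hM1S : M₁ ≤ S := by
    rw [hM₁]
    apply Finset.max'_le
    intro y hy
    rcases Finset.mem_insert.mp hy with h0 | hy
    · subst h0; exact Finset.sum_nonneg fun i _ => (hbox i).1
    · obtain ⟨i, hi, rfl⟩ := Finset.mem_image.mp hy
      have hik : i < k := Finset.mem_Iio.mp hi
      calc a i ≤ ∑ t ∈ Finset.Iic i, xhat t := (hps i).1
        _ ≤ S := Finset.sum_le_sum_of_subset_of_nonneg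
            (fun t ht => Finset.mem_Iio.mpr (lt_of_le_of_lt (Finset.mem_Iic.mp ht) hik))
            (fun t _ _ => (hbox t).1)
  by_contra hne
  have hSgt : M₁ < S := lt_of_le_of_ne hM1S (fun h => hne h.symm)
  have hM1_nonneg : 0 ≤ M₁ := by
    rw [hM₁]; exact Finset.le_max' _ _ (Finset.mem_insert_self _ _)
  -- largest index below k with positive value
  have hT : ((Finset.Iio k).filter (fun t => 0 < xhat t)).Nonempty := by
    by_contra h
    rw [Finset.not_nonempty_iff_eq_empty] at h
    have hS0 : S = 0 := Finset.sum_eq_zero (fun i hi => by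
      by_contra hx
      have hiT : i ∈ (Finset.Iio k).filter (fun t => 0 < xhat t) :=
        Finset.mem_filter.mpr ⟨hi, lt_of_le_of_ne (hbox i).1 (Ne.symm hx)⟩
      simp [h] at hiT)
    linarith
  set T := (Finset.Iio k).filter (fun t => 0 < xhat t) with hTdef
  set j := T.max' hT with hjdef
  have hjT : j ∈ T := T.max'_mem hT
  have hjk : j < k := Finset.mem_Iio.mp (Finset.mem_filter.mp hjT).1
  have hjpos : 0 < xhat j := (Finset.mem_filter.mp hjT).2
  have hjkne : j ≠ k := ne_of_lt hjk
  have hzero : ∀ l, j < l → l < k → xhat l = 0 := by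
    intro l hjl hlk
    by_contra hx
    have hlT : l ∈ T := Finset.mem_filter.mpr
      ⟨Finset.mem_Iio.mpr hlk, lt_of_le_of_ne (hbox l).1 (Ne.symm hx)⟩
    exact absurd (T.le_max' l hlT) (not_le.mpr hjl)
  have hsum_mid : ∀ i : Fin n, j ≤ i → i < k → ∑ t ∈ Finset.Iic i, xhat t = S := by
    intro i hji hik
    have hsub : Finset.Iic i ⊆ Finset.Iio k := fun t ht =>
      Finset.mem_Iio.mpr (lt_of_le_of_lt (Finset.mem_Iic.mp ht) hik)
    have hrest : ∑ t ∈ Finset.Iio k \ Finset.Iic i, xhat t = 0 :=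
      Finset.sum_eq_zero fun t ht => by
        obtain ⟨htk, hti⟩ := Finset.mem_sdiff.mp ht
        have hit : i < t := not_le.mp (fun h => hti (Finset.mem_Iic.mpr h))
        exact hzero t (lt_of_le_of_lt hji hit) (Finset.mem_Iio.mp htk)
    rw [hS, ← Finset.sum_sdiff hsub, hrest, zero_add]
  have hxku : xhat k < u k := lt_of_lt_of_le hlt (min_le_left _ _)
  set ε := min (xhat j) (min (u k - xhat k) (S - M₁)) with hεdef
  have hε : 0 < ε := by
    simp only [hεdef, lt_min_iff]
    exact ⟨hjpos, sub_pos.mpr hxku, sub_pos.mpr hSgt⟩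
  have hε1 : ε ≤ xhat j := min_le_left _ _
  have hε2 : ε ≤ u k - xhat k := le_trans (min_le_right _ _) (min_le_left _ _)
  have hε3 : ε ≤ S - M₁ := le_trans (min_le_right _ _) (min_le_right _ _)
  set y : Fin n → ℝ :=
    fun i => xhat i + ((if i = k then ε else 0) - (if i = j then ε else 0)) with hydef
  have hsumy : ∀ s : Finset (Fin n), ∑ t ∈ s, y t =
      ∑ t ∈ s, xhat t + ((if k ∈ s then ε else 0) - (if j ∈ s then ε else 0)) := by
    intro s
    simp only [hydef, Finset.sum_add_distrib, Finset.sum_sub_distrib,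
      Finset.sum_ite_eq' s]
  have hyfeas : feasible n a b u y := by
    constructor
    · intro i
      by_cases hik : i = k
      · subst hik
        have hyk : y i = xhat i + ε := by
          simp [hydef, Ne.symm hjkne]
        rw [hyk]
        have := (hbox i).1
        constructor <;> linarith
      · by_cases hij : i = j
        · subst hij
          have hyj : y j = xhat j - ε := by
            simp [hydef, hik, sub_eq_add_neg]
          rw [hyj]
          have := (hbox j).2
          constructor <;> linarith
        · have hyi : y i = xhat i := by simp [hydef, hik, hij]
          rw [hyi]
          exact hbox i
    · intro i
      rw [hsumy]
      by_cases hki : k ≤ i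
      · have hji : j ≤ i := le_trans (le_of_lt hjk) hki
        simp only [Finset.mem_Iic, if_pos hki, if_pos hji, sub_self, add_zero]
        exact hps i
      · by_cases hji : j ≤ i
        · have hik : i < k := not_le.mp hki
          have hmid := hsum_mid i hji hik
          simp only [Finset.mem_Iic, if_neg hki, if_pos hji, zero_sub, hmid]
          have hai : a i ≤ M₁ := by
            rw [hM₁]
            exact Finset.le_max' _ _ (Finset.mem_insert_of_mem
              (Finset.mem_image_of_mem a (Finset.mem_Iio.mpr hik)))
          have hbi : S ≤ b i := by rw [← hmid]; exact (hps i).2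
          constructor <;> linarith
        · simp only [Finset.mem_Iic, if_neg hki, if_neg hji, sub_zero, add_zero]
          exact hps i
  have hobj : ∑ i, c i * y i = ∑ i, c i * xhat i + ε * (c k - c j) := by
    simp only [hydef, mul_add, mul_sub, Finset.sum_add_distrib, Finset.sum_sub_distrib,
      mul_ite, mul_zero]
    rw [Finset.sum_ite_eq' Finset.univ k (fun i => c i * ε),
      Finset.sum_ite_eq' Finset.univ j (fun i => c i * ε)]
    simp only [Finset.mem_univ, if_pos]
    ring
  have hck : c k < c j := by
    have h0 : σ.symm j ≠ ⟨0, hn⟩ := by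
      intro h
      apply hjkne
      have : σ (σ.symm j) = σ ⟨0, hn⟩ := congrArg σ h
      rw [Equiv.apply_symm_apply] at this
      rw [this, ← hk]
    have hlt0 : (⟨0, hn⟩ : Fin n) < σ.symm j := by
      refine lt_of_le_of_ne ?_ (Ne.symm h0)
      exact Fin.mk_le_of_le_val (Nat.zero_le _)
    have := hσ hlt0
    simpa [Equiv.apply_symm_apply, ← hk] using this
  have hle := hopt y hyfeas
  rw [hobj] at hle
  have : ε * (c k - c j) < 0 := mul_neg_of_pos_of_neg hε (by linarith)
  linarith
end

section
/- Suppose all c_i are pairwise distinct and nonzero, and c_{σ(1)} > 0. Then any solution x̂ of (P) satisfies x̂_{σ(1)} = min{ max{0, M₂ − M₁}, min{u_{σ(1)}, m − M₁} }, where M₁ := max{0, max_{i<σ(1)} a_i}, M₂ := max{0, max_{i≥σ(1)} a_i}, and m := min_{i≥σ(1)} b_i. -/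
open Finset

lemma sum_split_Iic {n : ℕ} (x : Fin n → ℝ) {i j : Fin n} (h : i ≤ j) :
    ∑ l ∈ Iic j, x l = ∑ l ∈ Iic i, x l + ∑ l ∈ Ioc i j, x l := by
  have hset : Iic j = Iic i ∪ Ioc i j := by
    ext l; simp only [mem_Iic, mem_union, mem_Ioc, Fin.le_def, Fin.lt_def] at *
    omega
  rw [hset, Finset.sum_union]
  rw [Finset.disjoint_left]
  intro l hl hl'
  simp only [mem_Iic, mem_Ioc] at hl hl'
  exact absurd hl (not_le.mpr hl'.1)

lemma sum_split_Iio {n : ℕ} (x : Fin n → ℝ) {i j : Fin n} (h : i < j) :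
    ∑ l ∈ Iio j, x l = ∑ l ∈ Iic i, x l + ∑ l ∈ Ioo i j, x l := by
  have hset : Iio j = Iic i ∪ Ioo i j := by
    ext l; simp only [mem_Iio, mem_union, mem_Iic, mem_Ioo, Fin.le_def, Fin.lt_def] at *
    omega
  rw [hset, Finset.sum_union]
  rw [Finset.disjoint_left]
  intro l hl hl'
  simp only [mem_Iic, mem_Ioo] at hl hl'
  exact absurd hl (not_le.mpr hl'.1)

lemma sum_pert2 {n : ℕ} (s : Finset (Fin n)) (x : Fin n → ℝ) (j k : Fin n) (δ η : ℝ) :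
    ∑ i ∈ s, (x i + (if i = k then δ else 0) + (if i = j then η else 0)) =
      ∑ i ∈ s, x i + (if k ∈ s then δ else 0) + (if j ∈ s then η else 0) := by
  rw [Finset.sum_add_distrib, Finset.sum_add_distrib,
    Finset.sum_ite_eq' s k fun _ => δ, Finset.sum_ite_eq' s j fun _ => η]

lemma cost_pert2 {n : ℕ} (c x : Fin n → ℝ) (j k : Fin n) (δ η : ℝ) :
    ∑ i, c i * (x i + (if i = k then δ else 0) + (if i = j then η else 0)) =
      ∑ i, c i * x i + c k * δ + c j * η := by
  simp only [mul_add, mul_ite, mul_zero, Finset.sum_add_distrib,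
    Finset.sum_ite_eq' Finset.univ, Finset.mem_univ, if_true]

theorem first_entry_formula_pos_cost
    (n : ℕ) (hn : 0 < n) (a b c u : Fin n → ℝ)
    (hu : ∀ i, 0 ≤ u i) (hab : ∀ i, a i ≤ b i)
    (hfeas : ∃ x, feasible n a b u x)
    (hcinj : Function.Injective c) (hc0 : ∀ i, c i ≠ 0)
    (σ : Equiv.Perm (Fin n)) (hσ : StrictMono fun j => c (σ j))
    (xhat : Fin n → ℝ) (hxhat : isSolution n a b c u xhat)
    (k : Fin n) (hk : k = σ ⟨0, hn⟩) (hck : 0 < c k)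
    (M₁ M₂ m : ℝ)
    (hM₁ : M₁ = (insert (0 : ℝ) ((Finset.Iio k).image a)).max'
      (Finset.insert_nonempty _ _))
    (hM₂ : M₂ = (insert (0 : ℝ) ((Finset.Ici k).image a)).max'
      (Finset.insert_nonempty _ _))
    (hm : m = ((Finset.Ici k).image b).min' (Finset.nonempty_Ici.image b)) :
    xhat k = min (max 0 (M₂ - M₁)) (min (u k) (m - M₁)) := by
  obtain ⟨⟨hxb, hxc⟩, hopt⟩ := hxhat
  -- c k is the strict minimum of c
  have hcmin : ∀ i, i ≠ k → c k < c i := by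
    intro i hi
    have hne : σ.symm i ≠ ⟨0, hn⟩ := by
      intro h
      apply hi
      rw [hk, ← h, Equiv.apply_symm_apply]
    have h0 : (⟨0, hn⟩ : Fin n) < σ.symm i :=
      lt_of_le_of_ne (by simp [Fin.le_def]) (Ne.symm hne)
    have := hσ h0
    simpa [← hk] using this
  -- basic facts about M₁, M₂, m
  have hM₁0 : (0:ℝ) ≤ M₁ := hM₁ ▸ Finset.le_max' _ _ (Finset.mem_insert_self _ _)
  have hM₂0 : (0:ℝ) ≤ M₂ := hM₂ ▸ Finset.le_max' _ _ (Finset.mem_insert_self _ _)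
  have hM₁a : ∀ i : Fin n, i < k → a i ≤ M₁ := fun i hi =>
    hM₁ ▸ Finset.le_max' _ _
      (Finset.mem_insert_of_mem (Finset.mem_image_of_mem a (Finset.mem_Iio.mpr hi)))
  have hM₂a : ∀ i : Fin n, k ≤ i → a i ≤ M₂ := fun i hi =>
    hM₂ ▸ Finset.le_max' _ _
      (Finset.mem_insert_of_mem (Finset.mem_image_of_mem a (Finset.mem_Ici.mpr hi)))
  have hmb : ∀ i : Fin n, k ≤ i → m ≤ b i := fun i hi =>
    hm ▸ Finset.min'_le _ _ (Finset.mem_image_of_mem b (Finset.mem_Ici.mpr hi))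
  -- monotonicity of partial sums
  have hSmono : ∀ {i i' : Fin n}, i ≤ i' →
      ∑ j ∈ Iic i, xhat j ≤ ∑ j ∈ Iic i', xhat j := fun h =>
    Finset.sum_le_sum_of_subset_of_nonneg (Finset.Iic_subset_Iic.mpr h)
      (fun l _ _ => (hxb l).1)
  -- prefix sum before k
  have hP0 : 0 ≤ ∑ j ∈ Iio k, xhat j := Finset.sum_nonneg fun l _ => (hxb l).1
  have hM₁P : M₁ ≤ ∑ j ∈ Iio k, xhat j := by
    rw [hM₁]
    apply Finset.max'_le
    intro y hy
    rcases Finset.mem_insert.mp hy with h | h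
    · exact h ▸ hP0
    · obtain ⟨i, hi, rfl⟩ := Finset.mem_image.mp h
      have hik : i < k := Finset.mem_Iio.mp hi
      calc a i ≤ ∑ j ∈ Iic i, xhat j := (hxc i).1
        _ ≤ ∑ j ∈ Iio k, xhat j :=
          Finset.sum_le_sum_of_subset_of_nonneg
            (fun l hl => Finset.mem_Iio.mpr
              (lt_of_le_of_lt (Finset.mem_Iic.mp hl) hik))
            (fun l _ _ => (hxb l).1)
  have hSk : ∑ j ∈ Iic k, xhat j = ∑ j ∈ Iio k, xhat j + xhat k := by
    rw [← Finset.Iio_insert, Finset.sum_insert (by simp)]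
    ring
  have hSkm : ∑ j ∈ Iic k, xhat j ≤ m := by
    have hmem : m ∈ (Finset.Ici k).image b :=
      hm ▸ Finset.min'_mem _ (Finset.nonempty_Ici.image b)
    obtain ⟨i, hi, hbi⟩ := Finset.mem_image.mp hmem
    calc ∑ j ∈ Iic k, xhat j ≤ ∑ j ∈ Iic i, xhat j := hSmono (Finset.mem_Ici.mp hi)
      _ ≤ b i := (hxc i).2
      _ = m := hbi
  -- upper bound 1 : xhat k ≤ m - M₁
  have hub1 : xhat k ≤ m - M₁ := by
    have := hSk ▸ hSkm
    linarith
  -- upper bound 2 : xhat k ≤ max 0 (M₂ - M₁)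
  have hub2 : xhat k ≤ max 0 (M₂ - M₁) := by
    by_contra hgt
    push_neg at hgt
    set t : ℝ := max 0 (M₂ - M₁) with ht
    set δ : ℝ := t - xhat k with hδ
    have hδneg : δ < 0 := by simp only [hδ]; linarith
    set y : Fin n → ℝ := fun i => xhat i + (if i = k then δ else 0) + (if i = k then 0 else 0)
      with hy
    have hysum : ∀ i : Fin n, ∑ l ∈ Iic i, y l =
        ∑ l ∈ Iic i, xhat l + (if k ≤ i then δ else 0) := by
      intro i
      rw [hy]
      rw [sum_pert2 (Iic i) xhat k k δ 0]
      simp [Finset.mem_Iic]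
    have hyfeas : feasible n a b u y := by
      constructor
      · intro i
        by_cases hik : i = k
        · rw [hik]
          have hyk : y k = xhat k + δ := by simp [hy]
          rw [hyk]
          have ht0 : 0 ≤ t := le_max_left _ _
          have huk : xhat k ≤ u k := (hxb k).2
          constructor <;> simp only [hδ] <;> linarith
        · have hyi : y i = xhat i := by simp [hy, hik]
          rw [hyi]
          exact hxb i
      · intro i
        rw [hysum i]
        by_cases hki : k ≤ i
        · rw [if_pos hki]
          constructor
          · have hS : ∑ j ∈ Iic k, xhat j ≤ ∑ j ∈ Iic i, xhat j := hSmono hki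
            have haM : a i ≤ M₂ := hM₂a i hki
            have htM : M₂ - M₁ ≤ t := le_max_right _ _
            rw [hSk] at hS
            simp only [hδ]
            linarith
          · have := (hxc i).2
            linarith
        · rw [if_neg hki]
          simpa using hxc i
      -- cost decreases: contradiction
    have hcost : ∑ i, c i * y i = ∑ i, c i * xhat i + c k * δ := by
      rw [hy, cost_pert2 c xhat k k δ 0]
      ring
    have := hopt y hyfeas
    rw [hcost] at this
    nlinarith [mul_neg_of_pos_of_neg hck hδneg]
  -- now the lower bound
  set V : ℝ := min (max 0 (M₂ - M₁)) (min (u k) (m - M₁)) with hV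
  have hupper : xhat k ≤ V := le_min hub2 (le_min (hxb k).2 hub1)
  refine le_antisymm hupper ?_
  by_contra hlow
  push_neg at hlow
  have hVuk : V ≤ u k := le_trans (min_le_right _ _) (min_le_left _ _)
  have hVm : V ≤ m - M₁ := le_trans (min_le_right _ _) (min_le_right _ _)
  have hVmax : V ≤ max 0 (M₂ - M₁) := min_le_left _ _
  have hxk0 : 0 ≤ xhat k := (hxb k).1
  have hVpos : 0 < V := lt_of_le_of_lt hxk0 hlow
  have hVM₂ : V ≤ M₂ - M₁ := by
    rcases le_total (M₂ - M₁) 0 with h | h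
    · exfalso
      have : max 0 (M₂ - M₁) = 0 := max_eq_left h
      rw [this] at hVmax
      linarith
    · rwa [max_eq_right h] at hVmax
  rcases lt_or_ge M₁ (∑ j ∈ Iio k, xhat j) with hPgt | hPle
  · -- Case A : prefix sum exceeds M₁; shift mass from some j < k to k
    have hFne : ((Iio k).filter (fun l => 0 < xhat l)).Nonempty := by
      by_contra hF
      rw [Finset.not_nonempty_iff_eq_empty] at hF
      have hz : ∑ j ∈ Iio k, xhat j = 0 := by
        apply Finset.sum_eq_zero
        intro l hl
        by_contra hx
        have hpos : 0 < xhat l := lt_of_le_of_ne (hxb l).1 (Ne.symm hx)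
        have : l ∈ (Iio k).filter (fun l => 0 < xhat l) :=
          Finset.mem_filter.mpr ⟨hl, hpos⟩
        rw [hF] at this
        exact absurd this (Finset.notMem_empty l)
      rw [hz] at hPgt
      linarith
    set j : Fin n := ((Iio k).filter (fun l => 0 < xhat l)).max' hFne with hj
    have hjmem : j ∈ (Iio k).filter (fun l => 0 < xhat l) := Finset.max'_mem _ _
    have hjk : j < k := Finset.mem_Iio.mp (Finset.mem_filter.mp hjmem).1
    have hjpos : 0 < xhat j := (Finset.mem_filter.mp hjmem).2
    have hjne : j ≠ k := ne_of_lt hjk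
    have hvanish : ∀ l, j < l → l < k → xhat l = 0 := by
      intro l hjl hlk
      by_contra hx
      have hpos : 0 < xhat l := lt_of_le_of_ne (hxb l).1 (Ne.symm hx)
      have hmem : l ∈ (Iio k).filter (fun l => 0 < xhat l) :=
        Finset.mem_filter.mpr ⟨Finset.mem_Iio.mpr hlk, hpos⟩
      exact absurd (Finset.le_max' _ _ hmem) (not_le.mpr hjl)
    set ε : ℝ := min (xhat j) (min (u k - xhat k) ((∑ l ∈ Iio k, xhat l) - M₁)) with hε
    have hεpos : 0 < ε :=
      lt_min hjpos (lt_min (by linarith [lt_of_lt_of_le hlow hVuk]) (by linarith))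
    have hε1 : ε ≤ xhat j := min_le_left _ _
    have hε2 : ε ≤ u k - xhat k := le_trans (min_le_right _ _) (min_le_left _ _)
    have hε3 : ε ≤ (∑ l ∈ Iio k, xhat l) - M₁ :=
      le_trans (min_le_right _ _) (min_le_right _ _)
    set y : Fin n → ℝ := fun i => xhat i + (if i = k then ε else 0) + (if i = j then -ε else 0)
      with hy
    have hysum : ∀ i : Fin n, ∑ l ∈ Iic i, y l =
        ∑ l ∈ Iic i, xhat l + (if k ≤ i then ε else 0) + (if j ≤ i then -ε else 0) := by
      intro i
      rw [hy, sum_pert2 (Iic i) xhat j k ε (-ε)]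
      simp [Finset.mem_Iic]
    have hyfeas : feasible n a b u y := by
      constructor
      · intro i
        by_cases hik : i = k
        · rw [hik]
          have hyk : y k = xhat k + ε := by simp [hy, Ne.symm hjne]
          rw [hyk]
          constructor <;> linarith
        · by_cases hij : i = j
          · rw [hij]
            have hyj : y j = xhat j + -ε := by simp [hy, hjne]
            rw [hyj]
            have := (hxb j).2
            constructor <;> linarith
          · have hyi : y i = xhat i := by simp [hy, hik, hij]
            rw [hyi]
            exact hxb i
      · intro i
        rw [hysum i]
        by_cases hki : k ≤ i
        · have hji : j ≤ i := le_trans (le_of_lt hjk) hki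
          rw [if_pos hki, if_pos hji]
          have h1 := (hxc i).1
          have h2 := (hxc i).2
          constructor <;> linarith
        · by_cases hji : j ≤ i
          · rw [if_neg hki, if_pos hji]
            have hik : i < k := not_le.mp hki
            have hsplit := sum_split_Iio xhat hik
            have hzero : ∑ l ∈ Ioo i k, xhat l = 0 := by
              apply Finset.sum_eq_zero
              intro l hl
              have hl' := Finset.mem_Ioo.mp hl
              exact hvanish l (lt_of_le_of_lt hji hl'.1) hl'.2
            have hSiP : ∑ l ∈ Iic i, xhat l = ∑ l ∈ Iio k, xhat l := by
              rw [hsplit, hzero]; ring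
            have haM : a i ≤ M₁ := hM₁a i hik
            have h2 := (hxc i).2
            constructor <;> [skip; linarith]
            rw [hSiP]
            linarith
          · rw [if_neg hki, if_neg hji]
            simpa using hxc i
    have hcost : ∑ i, c i * y i = ∑ i, c i * xhat i + c k * ε + c j * (-ε) := by
      rw [hy, cost_pert2 c xhat j k ε (-ε)]
    have hle := hopt y hyfeas
    rw [hcost] at hle
    have hcj : c k < c j := hcmin j hjne
    nlinarith [mul_pos (sub_pos.mpr hcj) hεpos]
  · -- Case B : prefix sum equals M₁; shift mass from some j > k to k
    have hPeq : ∑ j ∈ Iio k, xhat j = M₁ := le_antisymm hPle hM₁P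
    have hSkM : ∑ j ∈ Iic k, xhat j = M₁ + xhat k := by rw [hSk, hPeq]
    have hSklt : M₁ + xhat k < M₂ := by linarith [lt_of_lt_of_le hlow hVM₂]
    have hM₂mem : M₂ ∈ insert (0:ℝ) ((Finset.Ici k).image a) :=
      hM₂ ▸ Finset.max'_mem _ _
    have hM₂im : M₂ ∈ (Finset.Ici k).image a := by
      rcases Finset.mem_insert.mp hM₂mem with h | h
      · exfalso; rw [h] at hSklt; linarith
      · exact h
    obtain ⟨p, hp, hap⟩ := Finset.mem_image.mp hM₂im
    have hkp : k ≤ p := Finset.mem_Ici.mp hp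
    have hkp' : k < p := by
      apply lt_of_le_of_ne hkp
      rintro rfl
      have := (hxc k).1
      rw [hSkM, hap] at this
      linarith
    have hSp : M₂ ≤ ∑ l ∈ Iic p, xhat l := hap ▸ (hxc p).1
    have hsplitp := sum_split_Iic xhat hkp
    have hIocpos : 0 < ∑ l ∈ Ioc k p, xhat l := by
      rw [hsplitp, hSkM] at hSp
      linarith
    have hFne : ((Ioc k p).filter (fun l => 0 < xhat l)).Nonempty := by
      by_contra hF
      rw [Finset.not_nonempty_iff_eq_empty] at hF
      have hz : ∑ l ∈ Ioc k p, xhat l = 0 := by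
        apply Finset.sum_eq_zero
        intro l hl
        by_contra hx
        have hpos : 0 < xhat l := lt_of_le_of_ne (hxb l).1 (Ne.symm hx)
        have : l ∈ (Ioc k p).filter (fun l => 0 < xhat l) :=
          Finset.mem_filter.mpr ⟨hl, hpos⟩
        rw [hF] at this
        exact absurd this (Finset.notMem_empty l)
      rw [hz] at hIocpos
      linarith
    set j : Fin n := ((Ioc k p).filter (fun l => 0 < xhat l)).min' hFne with hj
    have hjmem : j ∈ (Ioc k p).filter (fun l => 0 < xhat l) := Finset.min'_mem _ _
    have hkj : k < j := (Finset.mem_Ioc.mp (Finset.mem_filter.mp hjmem).1).1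
    have hjp : j ≤ p := (Finset.mem_Ioc.mp (Finset.mem_filter.mp hjmem).1).2
    have hjpos : 0 < xhat j := (Finset.mem_filter.mp hjmem).2
    have hjne : j ≠ k := ne_of_gt hkj
    have hvanish : ∀ l, k < l → l < j → xhat l = 0 := by
      intro l hkl hlj
      by_contra hx
      have hpos : 0 < xhat l := lt_of_le_of_ne (hxb l).1 (Ne.symm hx)
      have hmem : l ∈ (Ioc k p).filter (fun l => 0 < xhat l) :=
        Finset.mem_filter.mpr ⟨Finset.mem_Ioc.mpr ⟨hkl, le_trans (le_of_lt hlj) hjp⟩, hpos⟩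
      exact absurd (Finset.min'_le _ _ hmem) (not_le.mpr hlj)
    set ε : ℝ := min (xhat j) (min (u k - xhat k) (m - (M₁ + xhat k))) with hε
    have hεpos : 0 < ε :=
      lt_min hjpos (lt_min (by linarith [lt_of_lt_of_le hlow hVuk])
        (by linarith [lt_of_lt_of_le hlow hVm]))
    have hε1 : ε ≤ xhat j := min_le_left _ _
    have hε2 : ε ≤ u k - xhat k := le_trans (min_le_right _ _) (min_le_left _ _)
    have hε3 : ε ≤ m - (M₁ + xhat k) := le_trans (min_le_right _ _) (min_le_right _ _)
    set y : Fin n → ℝ := fun i => xhat i + (if i = k then ε else 0) + (if i = j then -ε else 0)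
      with hy
    have hysum : ∀ i : Fin n, ∑ l ∈ Iic i, y l =
        ∑ l ∈ Iic i, xhat l + (if k ≤ i then ε else 0) + (if j ≤ i then -ε else 0) := by
      intro i
      rw [hy, sum_pert2 (Iic i) xhat j k ε (-ε)]
      simp [Finset.mem_Iic]
    have hyfeas : feasible n a b u y := by
      constructor
      · intro i
        by_cases hik : i = k
        · rw [hik]
          have hyk : y k = xhat k + ε := by simp [hy, Ne.symm hjne]
          rw [hyk]
          constructor <;> linarith
        · by_cases hij : i = j
          · rw [hij]
            have hyj : y j = xhat j + -ε := by simp [hy, hjne]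
            rw [hyj]
            have := (hxb j).2
            constructor <;> linarith
          · have hyi : y i = xhat i := by simp [hy, hik, hij]
            rw [hyi]
            exact hxb i
      · intro i
        rw [hysum i]
        by_cases hji : j ≤ i
        · have hki : k ≤ i := le_trans (le_of_lt hkj) hji
          rw [if_pos hki, if_pos hji]
          have h1 := (hxc i).1
          have h2 := (hxc i).2
          constructor <;> linarith
        · by_cases hki : k ≤ i
          · rw [if_pos hki, if_neg hji]
            have hij : i < j := not_le.mp hji
            have hsplit := sum_split_Iic xhat hki
            have hzero : ∑ l ∈ Ioc k i, xhat l = 0 := by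
              apply Finset.sum_eq_zero
              intro l hl
              have hl' := Finset.mem_Ioc.mp hl
              exact hvanish l hl'.1 (lt_of_le_of_lt hl'.2 hij)
            have hSiSk : ∑ l ∈ Iic i, xhat l = M₁ + xhat k := by
              rw [hsplit, hzero, hSkM]; ring
            have h1 := (hxc i).1
            have hbm : m ≤ b i := hmb i hki
            constructor
            · linarith
            · rw [hSiSk]; linarith
          · rw [if_neg hki, if_neg hji]
            simpa using hxc i
    have hcost : ∑ i, c i * y i = ∑ i, c i * xhat i + c k * ε + c j * (-ε) := by
      rw [hy, cost_pert2 c xhat j k ε (-ε)]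
    have hle := hopt y hyfeas
    rw [hcost] at hle
    have hcj : c k < c j := hcmin j hjne
    nlinarith [mul_pos (sub_pos.mpr hcj) hεpos]
end

section
/- Suppose all c_i are pairwise distinct and c_{σ(1)} < 0. Then any solution x̂ of (P) satisfies x̂_{σ(1)} = min{u_{σ(1)}, m − M₁}, where M₁ := max{0, max_{i<σ(1)} a_i} and m := min_{i≥σ(1)} b_i. -/
/-!
Write `S i` for the prefix sums of `x̂`. Every feasible point has `x̂ k = S k - ∑_{j<k} x̂ j` with
`S k ≤ S i ≤ b i` for `i ≥ k` and `a i ≤ S i ≤ ∑_{j<k} x̂ j` for `i < k`, which gives the upper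
bound. If `x̂ k` were strictly below both `u k` and `m - M₁`, then either `∑_{j<k} x̂ j > M₁` or
`S k < m`. In the first case the last positive entry before `k` can pass a little mass to `k`;
in the second, `k` can take a little mass from the first positive entry after `k`, or from
nowhere if there is none. The prefix sums are constant between the two entries, so no active
constraint is touched, while the cost drops by a multiple of `c k - c j < 0` (resp. `c k < 0`),
contradicting optimality.
-/

open Finset

open Filter Topology

lemma eventually_add_mul_le {α β γ : ℝ} (h : α ≤ γ) (hβ : 0 < β → α < γ) :
    ∀ᶠ ε in 𝓝[>] (0 : ℝ), α + ε * β ≤ γ := by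
  rcases h.lt_or_eq with h | rfl
  · have hcont : Tendsto (fun ε : ℝ => α + ε * β) (𝓝 0) (𝓝 α) :=
      Continuous.tendsto' (by fun_prop) 0 α (by simp)
    exact nhdsWithin_le_nhds ((hcont.eventually (gt_mem_nhds h)).mono fun _ => le_of_lt)
  · filter_upwards [self_mem_nhdsWithin] with ε (hε : 0 < ε)
    have : β ≤ 0 := not_lt.1 fun hβpos => (hβ hβpos).false
    nlinarith

lemma eventually_le_add_mul {α β γ : ℝ} (h : γ ≤ α) (hβ : β < 0 → γ < α) :
    ∀ᶠ ε in 𝓝[>] (0 : ℝ), γ ≤ α + ε * β :=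
  (eventually_add_mul_le (neg_le_neg h) fun hβ' => neg_lt_neg (hβ (neg_pos.1 hβ'))).mono
    fun ε hε => by linarith

lemma sum_Iic_eq_of_forall_eq_zero {ι M : Type*} [LinearOrder ι] [LocallyFiniteOrderBot ι]
    [AddCommMonoid M] {f : ι → M} {i i' : ι} (h : i ≤ i')
    (hz : ∀ p, i < p → p ≤ i' → f p = 0) : ∑ p ∈ Iic i', f p = ∑ p ∈ Iic i, f p :=
  (sum_subset (Iic_subset_Iic.2 h) fun p hp hp' =>
    hz p (not_le.1 (mt mem_Iic.2 hp')) (mem_Iic.1 hp)).symm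

lemma sum_Iio_eq_of_forall_eq_zero {ι M : Type*} [LinearOrder ι] [LocallyFiniteOrderBot ι]
    [AddCommMonoid M] {f : ι → M} {i k : ι} (h : i < k)
    (hz : ∀ p, i < p → p < k → f p = 0) : ∑ p ∈ Iio k, f p = ∑ p ∈ Iic i, f p :=
  (sum_subset (fun _ hp => mem_Iio.2 ((mem_Iic.1 hp).trans_lt h)) fun p hp hp' =>
    hz p (not_le.1 (mt mem_Iic.2 hp')) (mem_Iio.1 hp)).symm

lemma sum_Iic_pi_single_one {ι R : Type*} [LinearOrder ι] [LocallyFiniteOrderBot ι]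
    [AddCommMonoidWithOne R] (k i : ι) :
    ∑ j ∈ Iic i, Pi.single k (1 : R) j = if k ≤ i then 1 else 0 := by
  simp [sum_pi_single']

lemma sum_mul_pi_single_one {ι R : Type*} [Fintype ι] [DecidableEq ι] [NonAssocSemiring R]
    (c : ι → R) (k : ι) : ∑ i, c i * (Pi.single k 1 : ι → R) i = c k := by
  simp [Pi.single_apply]

lemma sum_mul_pi_single_sub_pi_single {ι R : Type*} [Fintype ι] [DecidableEq ι] [Ring R]
    (c : ι → R) (j k : ι) : ∑ i, c i * (Pi.single k 1 - Pi.single j 1 : ι → R) i = c k - c j := by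
  simp only [Pi.sub_apply, mul_sub, sum_sub_distrib, sum_mul_pi_single_one]

lemma apply_lt_of_strictMono_perm {ι β : Type*} [PartialOrder ι] [Preorder β] {f : ι → β}
    {σ : Equiv.Perm ι} (hσ : StrictMono fun j => f (σ j)) {i₀ : ι} (hi₀ : IsBot i₀) {j : ι}
    (hj : j ≠ σ i₀) : f (σ i₀) < f j := by
  have := hσ ((hi₀ (σ.symm j)).lt_of_ne fun h => hj (by rw [h, σ.apply_symm_apply]))
  simpa only [σ.apply_symm_apply] using this

/-- For feasible `x`, the directions `d` along which `x + ε • d` stays feasible for small `ε > 0`: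
no constraint that is active at `x` is pushed outward. -/
def IsFeasibleDirection (n : ℕ) (a b u x d : Fin n → ℝ) : Prop :=
  (∀ i, 0 < d i → x i < u i) ∧ (∀ i, d i < 0 → 0 < x i) ∧
  (∀ i, 0 < ∑ j ∈ Iic i, d j → ∑ j ∈ Iic i, x j < b i) ∧
  (∀ i, ∑ j ∈ Iic i, d j < 0 → a i < ∑ j ∈ Iic i, x j)

section

variable {n : ℕ} {a b c u x d : Fin n → ℝ}

lemma feasible.eventually_add_smul (hx : feasible n a b u x)
    (hd : IsFeasibleDirection n a b u x d) :
    ∀ᶠ ε in 𝓝[>] (0 : ℝ), feasible n a b u (x + ε • d) := by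
  obtain ⟨hbox, hpre⟩ := hx
  obtain ⟨hup, hdown, hpre_up, hpre_down⟩ := hd
  have hsum : ∀ (ε : ℝ) i, ∑ j ∈ Iic i, (x j + ε * d j)
      = ∑ j ∈ Iic i, x j + ε * ∑ j ∈ Iic i, d j := by
    simp [sum_add_distrib, mul_sum]
  simp only [feasible, Pi.add_apply, Pi.smul_apply, smul_eq_mul, hsum, eventually_and,
    eventually_all]
  exact ⟨fun i => ⟨eventually_le_add_mul (hbox i).1 (hdown i),
      eventually_add_mul_le (hbox i).2 (hup i)⟩,
    fun i => ⟨eventually_le_add_mul (hpre i).1 (hpre_down i),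
      eventually_add_mul_le (hpre i).2 (hpre_up i)⟩⟩

lemma isSolution.sum_mul_nonneg (hx : isSolution n a b c u x)
    (hd : IsFeasibleDirection n a b u x d) : 0 ≤ ∑ i, c i * d i := by
  obtain ⟨ε, hε, hεpos⟩ := ((hx.1.eventually_add_smul hd).and self_mem_nhdsWithin).exists
  have hcost := hx.2 _ hε
  simp only [Pi.add_apply, Pi.smul_apply, smul_eq_mul, mul_add, sum_add_distrib,
    mul_left_comm _ ε, ← mul_sum, le_add_iff_nonneg_right] at hcost
  exact nonneg_of_mul_nonneg_right hcost hεpos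

lemma isFeasibleDirection_single {k : Fin n} (hk : x k < u k)
    (hb : ∀ i, k ≤ i → ∑ j ∈ Iic i, x j < b i) :
    IsFeasibleDirection n a b u x (Pi.single k 1) := by
  refine ⟨fun i hi => ?_, fun i hi => ?_, fun i hi => ?_, fun i hi => ?_⟩
  · obtain rfl : i = k := by by_contra h; simp [h] at hi
    exact hk
  · rw [Pi.single_apply] at hi
    split_ifs at hi <;> norm_num at hi
  · rw [sum_Iic_pi_single_one] at hi
    split_ifs at hi with hki
    · exact hb i hki
    · norm_num at hi
  · rw [sum_Iic_pi_single_one] at hi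
    split_ifs at hi <;> norm_num at hi

lemma isFeasibleDirection_transfer {j k : Fin n} (hjk : j ≠ k) (hk : x k < u k)
    (hj : 0 < x j) (hb : ∀ i, k ≤ i → i < j → ∑ p ∈ Iic i, x p < b i)
    (ha : ∀ i, j ≤ i → i < k → a i < ∑ p ∈ Iic i, x p) :
    IsFeasibleDirection n a b u x (Pi.single k 1 - Pi.single j 1) := by
  simp only [IsFeasibleDirection, Pi.sub_apply, sum_sub_distrib, sum_Iic_pi_single_one]
  simp only [Pi.single_apply]
  refine ⟨fun i hi => ?_, fun i hi => ?_, fun i hi => ?_, fun i hi => ?_⟩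
  · obtain rfl : i = k := by by_contra h; split_ifs at hi <;> norm_num at hi
    exact hk
  · obtain rfl : i = j := by by_contra h; split_ifs at hi <;> norm_num at hi
    exact hj
  · by_cases hki : k ≤ i <;> by_cases hji : j ≤ i <;> norm_num [hki, hji] at hi
    exact hb i hki (not_le.1 hji)
  · by_cases hki : k ≤ i <;> by_cases hji : j ≤ i <;> norm_num [hki, hji] at hi
    exact ha i hji (not_le.1 hki)

lemma feasible.sum_Iic_le (hx : feasible n a b u x) {k i : Fin n} (hki : k ≤ i) :
    ∑ j ∈ Iic k, x j ≤ b i :=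
  (sum_le_sum_of_subset_of_nonneg (Iic_subset_Iic.2 hki) fun p _ _ => (hx.1 p).1).trans
    (hx.2 i).2

lemma feasible.le_sum_Iio (hx : feasible n a b u x) {k i : Fin n} (hik : i < k) :
    a i ≤ ∑ j ∈ Iio k, x j :=
  (hx.2 i).1.trans <| sum_le_sum_of_subset_of_nonneg
    (fun _ hp => mem_Iio.2 ((mem_Iic.1 hp).trans_lt hik)) fun p _ _ => (hx.1 p).1

lemma isSolution.sum_Iio_le (hx : isSolution n a b c u x) {k : Fin n} (hk : x k < u k)
    (hc : ∀ j < k, c k < c j) {M : ℝ} (hM0 : 0 ≤ M) (hM : ∀ i < k, a i ≤ M) :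
    ∑ j ∈ Iio k, x j ≤ M := by
  by_contra! hlt
  have hx0 : ∀ p, 0 ≤ x p := fun p => (hx.1.1 p).1
  obtain ⟨p, hp, hxp⟩ :=
    exists_lt_of_sum_lt (f := fun _ => (0 : ℝ)) (by simpa using hM0.trans_lt hlt)
  -- the last positive entry before `k`
  obtain ⟨j, ⟨hjk, hxj⟩, hjmax⟩ :=
    wellFounded_gt.has_min {p | p < k ∧ 0 < x p} ⟨p, mem_Iio.1 hp, hxp⟩
  have hflat : ∀ i, j ≤ i → i < k → ∑ p ∈ Iio k, x p = ∑ p ∈ Iic i, x p :=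
    fun i hji hik => sum_Iio_eq_of_forall_eq_zero hik fun p hip hpk =>
      le_antisymm (not_lt.1 fun hxp => hjmax p ⟨hpk, hxp⟩ (hji.trans_lt hip)) (hx0 p)
  have := hx.sum_mul_nonneg (isFeasibleDirection_transfer hjk.ne hk hxj
    (fun i hki hij => absurd (hjk.trans_le hki) (not_lt.2 hij.le))
    (fun i hji hik => (hM i hik).trans_lt (hflat i hji hik ▸ hlt)))
  linarith [sum_mul_pi_single_sub_pi_single c j k, hc j hjk]

lemma isSolution.le_sum_Iic (hx : isSolution n a b c u x) {k : Fin n} (hk : x k < u k)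
    (hck : c k < 0) (hc : ∀ j, k < j → c k < c j) {m : ℝ} (hm : ∀ i, k ≤ i → m ≤ b i) :
    m ≤ ∑ j ∈ Iic k, x j := by
  by_contra! hlt
  have hx0 : ∀ p, 0 ≤ x p := fun p => (hx.1.1 p).1
  have hflat : ∀ i, k ≤ i → (∀ p, k < p → p ≤ i → x p = 0) → ∑ p ∈ Iic i, x p < b i :=
    fun i hki hz => by
      rw [sum_Iic_eq_of_forall_eq_zero hki hz]
      exact hlt.trans_le (hm i hki)
  by_cases hpos : ∃ j, k < j ∧ 0 < x j
  · -- the first positive entry after `k`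
    obtain ⟨j, ⟨hkj, hxj⟩, hjmin⟩ := wellFounded_lt.has_min {p | k < p ∧ 0 < x p} hpos
    have := hx.sum_mul_nonneg (isFeasibleDirection_transfer hkj.ne' hk hxj
      (fun i hki hij => hflat i hki fun p hkp hpi =>
        le_antisymm (not_lt.1 fun hxp => hjmin p ⟨hkp, hxp⟩ (hpi.trans_lt hij)) (hx0 p))
      (fun i hji hik => absurd (hkj.trans_le hji) (not_lt.2 hik.le)))
    linarith [sum_mul_pi_single_sub_pi_single c j k, hc j hkj]
  · push Not at hpos
    have := hx.sum_mul_nonneg (isFeasibleDirection_single hk fun i hki =>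
      hflat i hki fun p hkp _ => le_antisymm (hpos p hkp) (hx0 p))
    linarith [sum_mul_pi_single_one c k]

end

theorem first_entry_formula_neg_cost_general
    (n : ℕ) (hn : 0 < n) (a b c u : Fin n → ℝ)
    (σ : Equiv.Perm (Fin n)) (hσ : StrictMono fun j => c (σ j))
    (xhat : Fin n → ℝ) (hxhat : isSolution n a b c u xhat)
    (k : Fin n) (hk : k = σ ⟨0, hn⟩) (hck : c k < 0)
    (M₁ m : ℝ)
    (hM₁ : M₁ = (insert (0 : ℝ) ((Finset.Iio k).image a)).max'
      (Finset.insert_nonempty _ _))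
    (hm : m = ((Finset.Ici k).image b).min' (Finset.nonempty_Ici.image b)) :
    xhat k = min (u k) (m - M₁) := by
  have hc : ∀ j, j ≠ k → c k < c j := fun j hj =>
    hk ▸ apply_lt_of_strictMono_perm hσ (fun _ => Fin.mk_le_mk.2 (Nat.zero_le _)) (hk ▸ hj)
  have hsplit : ∑ j ∈ Iic k, xhat j = ∑ j ∈ Iio k, xhat j + xhat k := by
    rw [← Iio_insert, sum_insert notMem_Iio_self, add_comm]
  have hM₁a : ∀ i < k, a i ≤ M₁ := fun i hi =>
    hM₁ ▸ le_max' _ _ (mem_insert_of_mem (mem_image_of_mem a (mem_Iio.2 hi)))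
  have hmb : ∀ i, k ≤ i → m ≤ b i := fun i hi =>
    hm ▸ min'_le _ _ (mem_image_of_mem b (mem_Ici.2 hi))
  refine le_antisymm (le_min (hxhat.1.1 k).2 ?_) ?_
  · have hM₁T : M₁ ≤ ∑ j ∈ Iio k, xhat j := hM₁ ▸ max'_le _ _ _ (by
      simp only [mem_insert, mem_image, mem_Iio]
      rintro _ (rfl | ⟨i, hi, rfl⟩)
      exacts [sum_nonneg fun p _ => (hxhat.1.1 p).1, hxhat.1.le_sum_Iio hi])
    have hSm : ∑ j ∈ Iic k, xhat j ≤ m := hm ▸ le_min' _ _ _ (by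
      simp only [mem_image, mem_Ici]
      rintro _ ⟨i, hi, rfl⟩
      exact hxhat.1.sum_Iic_le hi)
    linarith
  · rcases lt_or_ge (xhat k) (u k) with hlt | hge
    · have hM₁0 : 0 ≤ M₁ := hM₁ ▸ le_max' _ _ (mem_insert_self _ _)
      have hT := hxhat.sum_Iio_le hlt (fun j hj => hc j hj.ne) hM₁0 hM₁a
      have hS := hxhat.le_sum_Iic hlt hck (fun j hj => hc j hj.ne') hmb
      exact min_le_of_right_le (by linarith)
    · exact min_le_of_left_le hge

theorem first_entry_formula_neg_cost
    (n : ℕ) (hn : 0 < n) (a b c u : Fin n → ℝ)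
    (hu : ∀ i, 0 ≤ u i) (hab : ∀ i, a i ≤ b i)
    (hfeas : ∃ x, feasible n a b u x)
    (hcinj : Function.Injective c)
    (σ : Equiv.Perm (Fin n)) (hσ : StrictMono fun j => c (σ j))
    (xhat : Fin n → ℝ) (hxhat : isSolution n a b c u xhat)
    (k : Fin n) (hk : k = σ ⟨0, hn⟩) (hck : c k < 0)
    (M₁ m : ℝ)
    (hM₁ : M₁ = (insert (0 : ℝ) ((Finset.Iio k).image a)).max'
      (Finset.insert_nonempty _ _))
    (hm : m = ((Finset.Ici k).image b).min' (Finset.nonempty_Ici.image b)) :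
    xhat k = min (u k) (m - M₁) :=
  first_entry_formula_neg_cost_general n hn a b c u σ hσ xhat hxhat k hk hck M₁ m hM₁ hm
end

section
/- (Decomposition step) Let x̂ be a solution of (P) and let k := σ(1). Then P_min = c_k · x̂_k + P'_min, where P'_min is the minimum value of the reduced problem (P') in the remaining n−1 variables obtained by fixing x_k = x̂_k, with modified bounds a'_i, b'_i: a'_i = a_i and b'_i = b_i for i < k−1; a'_{k-1} = max{a_{k-1}, a_k − x̂_k} and b'_{k-1} = min{b_{k-1}, b_k − x̂_k}; a'_i = a_i − x̂_k and b'_i = b_i − x̂_k for i > k. Moreover, the restriction of x̂ to the remaining coordinates is a solution of (P'). -/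
open Finset

/-- Modified lower bounds of the reduced problem (P') after fixing coordinate k at value v. -/
def redA (n : ℕ) (a : Fin n → ℝ) (k : Fin n) (v : ℝ) : Fin n → ℝ := fun i =>
  if (i : ℕ) + 1 = (k : ℕ) then max (a i) (a k - v)
  else if k < i then a i - v else a i

/-- Modified upper bounds of the reduced problem (P'). -/
def redB (n : ℕ) (b : Fin n → ℝ) (k : Fin n) (v : ℝ) : Fin n → ℝ := fun i =>
  if (i : ℕ) + 1 = (k : ℕ) then min (b i) (b k - v)
  else if k < i then b i - v else b i

/-- Feasibility for the reduced problem (P') in the remaining n-1 variables,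
encoded by functions on Fin n vanishing at k. -/
def redFeasible (n : ℕ) (aP bP u : Fin n → ℝ) (k : Fin n) (x : Fin n → ℝ) : Prop :=
  x k = 0 ∧ (∀ i, i ≠ k → 0 ≤ x i ∧ x i ≤ u i) ∧
  ∀ i, i ≠ k → aP i ≤ ∑ j ∈ Finset.Iic i, x j ∧ ∑ j ∈ Finset.Iic i, x j ≤ bP i

/-- Solution of the reduced problem (P'). -/
def redSolution (n : ℕ) (aP bP c u : Fin n → ℝ) (k : Fin n) (x : Fin n → ℝ) : Prop :=
  redFeasible n aP bP u k x ∧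
  ∀ y, redFeasible n aP bP u k y → ∑ i, c i * x i ≤ ∑ i, c i * y i

lemma sum_Iic_update {n : ℕ} (f : Fin n → ℝ) (k i : Fin n) (v : ℝ) :
    ∑ j ∈ Finset.Iic i, Function.update f k v j =
    (∑ j ∈ Finset.Iic i, f j) + (if k ≤ i then v - f k else 0) := by
  by_cases h : k ≤ i
  · have hk : k ∈ Finset.Iic i := Finset.mem_Iic.mpr h
    rw [if_pos h, Finset.sum_update_of_mem hk,
        Finset.sum_eq_sum_sdiff_singleton_add hk f]
    ring
  · rw [if_neg h, Finset.sum_update_of_notMem (by simpa using h), add_zero]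

lemma sum_Iio_eq {n : ℕ} (f : Fin n → ℝ) (k : Fin n) :
    ∑ j ∈ Finset.Iio k, f j = (∑ j ∈ Finset.Iic k, f j) - f k := by
  have : Finset.Iic k = insert k (Finset.Iio k) := (Finset.Iio_insert k).symm
  rw [this, Finset.sum_insert (by simp)]; ring

lemma Iic_eq_Iio {n : ℕ} (i k : Fin n) (h : (i:ℕ) + 1 = (k:ℕ)) :
    Finset.Iic i = Finset.Iio k := by
  ext j; simp only [Finset.mem_Iic, Finset.mem_Iio, Fin.le_def, Fin.lt_def]; omega

lemma cost_split {n : ℕ} (c f : Fin n → ℝ) (k : Fin n) :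
    ∑ i, c i * f i = c k * f k + ∑ i ∈ Finset.univ.erase k, c i * f i := by
  rw [← Finset.sum_erase_add _ _ (Finset.mem_univ k)]; ring

theorem decomposition_step
    (n : ℕ) (hn : 0 < n) (a b c u : Fin n → ℝ)
    (hu : ∀ i, 0 ≤ u i) (hab : ∀ i, a i ≤ b i)
    (σ : Equiv.Perm (Fin n)) (hσ : Monotone fun j => c (σ j))
    (xhat : Fin n → ℝ) (hxhat : isSolution n a b c u xhat)
    (k : Fin n) (hk : k = σ ⟨0, hn⟩) :
    (∑ i, c i * xhat i =
      c k * xhat k + ∑ i, c i * (Function.update xhat k 0) i) ∧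
    redSolution n (redA n a k (xhat k)) (redB n b k (xhat k)) c u k
      (Function.update xhat k 0) := by
  obtain ⟨⟨hbox, hcum⟩, hopt⟩ := hxhat
  have erase_eq : ∀ f g : Fin n → ℝ, (∀ i, i ≠ k → f i = g i) →
      ∑ i ∈ Finset.univ.erase k, c i * f i = ∑ i ∈ Finset.univ.erase k, c i * g i := by
    intro f g h
    refine Finset.sum_congr rfl fun i hi => ?_
    rw [h i (Finset.ne_of_mem_erase hi)]
  have cost1 : ∑ i, c i * xhat i =
      c k * xhat k + ∑ i, c i * (Function.update xhat k 0) i := by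
    rw [cost_split c xhat k, cost_split c (Function.update xhat k 0) k,
        Function.update_self,
        erase_eq _ xhat (fun i hi => Function.update_of_ne hi 0 xhat)]
    ring
  refine ⟨cost1, ?_, ?_⟩
  · -- reduced feasibility of update xhat k 0
    refine ⟨Function.update_self k 0 xhat, fun i hi => ?_, fun i hi => ?_⟩
    · rw [Function.update_of_ne hi]; exact hbox i
    · have hsum := sum_Iic_update xhat k i 0
      by_cases h1 : (i:ℕ) + 1 = (k:ℕ)
      · have hki : ¬ k ≤ i := by simp only [Fin.le_def, not_le]; omega
        rw [if_neg hki, add_zero] at hsum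
        have hIio : Finset.Iic i = Finset.Iio k := Iic_eq_Iio i k h1
        have h2 : ∑ j ∈ Finset.Iic i, xhat j = (∑ j ∈ Finset.Iic k, xhat j) - xhat k := by
          rw [hIio]; exact sum_Iio_eq xhat k
        constructor
        · simp only [redA, if_pos h1, hsum, max_le_iff]
          exact ⟨(hcum i).1, by rw [h2]; linarith [(hcum k).1]⟩
        · simp only [redB, if_pos h1, hsum, le_min_iff]
          exact ⟨(hcum i).2, by rw [h2]; linarith [(hcum k).2]⟩
      · by_cases h2 : k < i
        · have hki : k ≤ i := le_of_lt h2
          rw [if_pos hki] at hsum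
          simp only [redA, redB, if_neg h1, if_pos h2, hsum]
          exact ⟨by linarith [(hcum i).1], by linarith [(hcum i).2]⟩
        · have hki : ¬ k ≤ i := fun h => h2 (lt_of_le_of_ne h (Ne.symm hi))
          rw [if_neg hki, add_zero] at hsum
          simp only [redA, redB, if_neg h1, if_neg h2, hsum]
          exact hcum i
  · -- optimality
    intro y ⟨hyk, hybox, hycum⟩
    set z := Function.update y k (xhat k) with hz
    have hzsum : ∀ i, ∑ j ∈ Finset.Iic i, z j =
        (∑ j ∈ Finset.Iic i, y j) + (if k ≤ i then xhat k else 0) := by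
      intro i
      rw [hz, sum_Iic_update y k i (xhat k), hyk, sub_zero]
    have hzfeas : feasible n a b u z := by
      refine ⟨fun i => ?_, fun i => ?_⟩
      · by_cases hik : i = k
        · subst hik; rw [hz, Function.update_self]; exact hbox i
        · rw [hz, Function.update_of_ne hik]; exact hybox i hik
      · rw [hzsum i]
        by_cases hik : i = k
        · subst hik
          rw [if_pos le_rfl]
          have hy : ∑ j ∈ Finset.Iic i, y j = ∑ j ∈ Finset.Iio i, y j := by
            rw [sum_Iio_eq y i, hyk, sub_zero]
          rw [hy]
          by_cases h0 : (i:ℕ) = 0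
          · have h3 : Finset.Iio i = ∅ := by
              ext j; simp only [Finset.mem_Iio, Fin.lt_def, Finset.notMem_empty,
                iff_false]; omega
            rw [h3, Finset.sum_empty, zero_add]
            have hIic : Finset.Iic i = {i} := by
              ext j; simp only [Finset.mem_Iic, Fin.le_def, Finset.mem_singleton,
                Fin.ext_iff]; omega
            have h4 := hcum i
            rw [hIic, Finset.sum_singleton] at h4
            exact h4
          · have hilt : (i:ℕ) - 1 < n := by omega
            set i' : Fin n := ⟨(i:ℕ) - 1, hilt⟩ with hi'
            have hi'k : i' ≠ i := by
              intro h
              have h5 := congrArg Fin.val h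
              simp only [hi'] at h5
              omega
            have hsucc : (i':ℕ) + 1 = (i:ℕ) := by simp only [hi']; omega
            have hc := hycum i' hi'k
            rw [Iic_eq_Iio i' i hsucc] at hc
            simp only [redA, redB, if_pos hsucc, max_le_iff, le_min_iff] at hc
            exact ⟨by linarith [hc.1.2], by linarith [hc.2.2]⟩
        · by_cases hki : k ≤ i
          · have hklt : k < i := lt_of_le_of_ne hki (fun h => hik h.symm)
            rw [if_pos hki]
            have hc := hycum i hik
            have h1 : ¬ (i:ℕ) + 1 = (k:ℕ) := by
              have := hklt; rw [Fin.lt_def] at this; omega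
            simp only [redA, redB, if_neg h1, if_pos hklt] at hc
            exact ⟨by linarith [hc.1], by linarith [hc.2]⟩
          · rw [if_neg hki, add_zero]
            have hc := hycum i hik
            have hilt : ¬ k < i := fun h => hki (le_of_lt h)
            by_cases h1 : (i:ℕ) + 1 = (k:ℕ)
            · simp only [redA, redB, if_pos h1, max_le_iff, le_min_iff] at hc
              exact ⟨hc.1.1, hc.2.1⟩
            · simp only [redA, redB, if_neg h1, if_neg hilt] at hc
              exact hc
    have hle := hopt z hzfeas
    have e1 : ∑ i, c i * (Function.update xhat k 0) i =
        ∑ i ∈ Finset.univ.erase k, c i * xhat i := by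
      rw [cost_split c _ k, Function.update_self,
          erase_eq _ xhat (fun i hi => Function.update_of_ne hi 0 xhat)]
      ring
    have e2 : ∑ i, c i * y i = ∑ i ∈ Finset.univ.erase k, c i * y i := by
      rw [cost_split c y k, hyk]; ring
    have e3 : ∑ i, c i * z i =
        c k * xhat k + ∑ i ∈ Finset.univ.erase k, c i * y i := by
      rw [cost_split c z k, hz, Function.update_self,
          erase_eq _ y (fun i hi => Function.update_of_ne hi _ y)]
    have e4 : ∑ i, c i * xhat i =
        c k * xhat k + ∑ i ∈ Finset.univ.erase k, c i * xhat i := cost_split c xhat k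
    linarith
end

section
/- If all c_i are pairwise distinct and nonzero and (P) is feasible, then (P) has a unique solution. -/
open Finset

noncomputable def T (n : ℕ) (x : Fin n → ℝ) (j : ℕ) : ℝ :=
  ∑ k ∈ Finset.range j, if h : k < n then x ⟨k, h⟩ else 0

lemma T_zero (n : ℕ) (x : Fin n → ℝ) : T n x 0 = 0 := by simp [T]

lemma T_succ (n : ℕ) (x : Fin n → ℝ) {j : ℕ} (h : j < n) :
    T n x (j+1) = T n x j + x ⟨j, h⟩ := by
  simp [T, Finset.sum_range_succ, dif_pos h]

lemma sum_Iic_eq_T (n : ℕ) (x : Fin n → ℝ) (i : Fin n) :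
    ∑ j ∈ Finset.Iic i, x j = T n x (i.1+1) := by
  unfold T
  refine Finset.sum_bij' (fun (j : Fin n) (_ : j ∈ Finset.Iic i) => j.1)
    (fun k hk => (⟨k, lt_of_lt_of_le (Finset.mem_range.1 hk) i.2⟩ : Fin n))
    ?_ ?_ ?_ ?_ ?_
  · intro j hj; simp at hj ⊢; omega
  · intro k hk; simp at hk ⊢; exact Fin.mk_le_of_le_val (by omega)
  · intro j hj; simp
  · intro k hk; simp
  · intro j hj
    have : j.1 < n := j.2
    simp [dif_pos this]

lemma pert (n : ℕ) (a b c u : Fin n → ℝ)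
    (m : Fin n → ℝ) (hm : feasible n a b u m)
    (p q : ℕ) (hpq : p ≤ q) (hqn : q < n) (hpn : p < n) (ε : ℝ)
    (hbp : 0 ≤ m ⟨p, hpn⟩ + ε ∧ m ⟨p, hpn⟩ + ε ≤ u ⟨p, hpn⟩)
    (hbq : ∀ h : q + 1 < n, 0 ≤ m ⟨q+1, h⟩ - ε ∧ m ⟨q+1, h⟩ - ε ≤ u ⟨q+1, h⟩)
    (hsum : ∀ j (h : j < n), p ≤ j → j ≤ q →
        a ⟨j, h⟩ ≤ T n m (j+1) + ε ∧ T n m (j+1) + ε ≤ b ⟨j, h⟩) :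
    feasible n a b u (fun i => m i + (if i.1 = p then ε else 0) - (if i.1 = q+1 then ε else 0)) ∧
    ∑ i, c i * (m i + (if i.1 = p then ε else 0) - (if i.1 = q+1 then ε else 0)) =
      ∑ i, c i * m i + c ⟨p, hpn⟩ * ε - (if h : q+1 < n then c ⟨q+1, h⟩ * ε else 0) := by
  set z : Fin n → ℝ :=
    fun i => m i + (if i.1 = p then ε else 0) - (if i.1 = q+1 then ε else 0) with hzdef
  have hTz : ∀ j, j ≤ n → T n z j = T n m j + (if p+1 ≤ j ∧ j ≤ q+1 then ε else 0) := by
    intro j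
    induction j with
    | zero => intro _; simp [T_zero]
    | succ j ih =>
      intro hjn
      have hjn' : j < n := by omega
      rw [T_succ n z hjn', T_succ n m hjn', ih (by omega)]
      have hz : z ⟨j, hjn'⟩ = m ⟨j, hjn'⟩ + (if j = p then ε else 0) - (if j = q+1 then ε else 0) := rfl
      rw [hz]
      split_ifs <;> first | (exfalso; omega) | ring
  constructor
  · constructor
    · intro i
      rcases eq_or_ne i.1 p with hip | hip
      · have hiq : i.1 ≠ q + 1 := by omega
        have hieq : i = ⟨p, hpn⟩ := Fin.ext hip
        have hpq1 : ¬(p = q + 1) := by omega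
        have hz : z i = m i + ε := by simp [hzdef, hip, hpq1]
        rw [hz, hieq]
        exact hbp
      · rcases eq_or_ne i.1 (q+1) with hiq | hiq
        · have hq1n : q + 1 < n := hiq ▸ i.2
          have hieq : i = ⟨q+1, hq1n⟩ := Fin.ext hiq
          have hpq1 : ¬(q + 1 = p) := by omega
          have hz : z i = m i - ε := by simp [hzdef, hiq, hpq1]
          rw [hz, hieq]
          exact hbq hq1n
        · have hz : z i = m i := by simp [hzdef, hip, hiq]
          rw [hz]; exact hm.1 i
    · intro i
      rw [sum_Iic_eq_T, hTz (i.1+1) i.2]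
      rcases le_or_gt p i.1 with hpi | hpi
      · rcases le_or_gt i.1 q with hiq | hiq
        · have hcond : p + 1 ≤ i.1 + 1 ∧ i.1 + 1 ≤ q + 1 := by omega
          rw [if_pos hcond]
          have := hsum i.1 i.2 hpi hiq
          simpa using this
        · have hcond : ¬(p + 1 ≤ i.1 + 1 ∧ i.1 + 1 ≤ q + 1) := by omega
          rw [if_neg hcond]
          have := hm.2 i
          rw [sum_Iic_eq_T] at this
          simpa using this
      · have hcond : ¬(p + 1 ≤ i.1 + 1 ∧ i.1 + 1 ≤ q + 1) := by omega
        rw [if_neg hcond]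
        have := hm.2 i
        rw [sum_Iic_eq_T] at this
        simpa using this
  · have expand : ∀ i : Fin n, c i * z i =
        c i * m i + (if i = ⟨p, hpn⟩ then c i * ε else 0)
          - (if h : q + 1 < n then (if i = ⟨q+1, h⟩ then c i * ε else 0) else 0) := by
      intro i
      have h1 : (if i = ⟨p, hpn⟩ then c i * ε else 0) = c i * (if i.1 = p then ε else 0) := by
        rcases eq_or_ne i.1 p with h | h
        · rw [if_pos (Fin.ext h), if_pos h]
        · rw [if_neg (fun hc => h (by rw [hc])), if_neg h, mul_zero]
      have h2 : (if h : q + 1 < n then (if i = ⟨q+1, h⟩ then c i * ε else 0) else 0)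
          = c i * (if i.1 = q+1 then ε else 0) := by
        by_cases hh : q + 1 < n
        · rw [dif_pos hh]
          rcases eq_or_ne i.1 (q+1) with h | h
          · rw [if_pos (Fin.ext h), if_pos h]
          · rw [if_neg (fun hc => h (by rw [hc])), if_neg h, mul_zero]
        · rw [dif_neg hh, if_neg (fun hc => hh (by rw [← hc]; exact i.2)), mul_zero]
      rw [h1, h2, hzdef]; ring
    rw [Finset.sum_congr rfl (fun i _ => expand i)]
    rw [Finset.sum_sub_distrib, Finset.sum_add_distrib]
    congr 1
    · congr 1
      rw [Finset.sum_ite_eq' Finset.univ (⟨p, hpn⟩ : Fin n) (fun i => c i * ε)]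
      simp
    · by_cases hh : q + 1 < n
      · simp only [dif_pos hh]
        rw [Finset.sum_ite_eq' Finset.univ (⟨q+1, hh⟩ : Fin n) (fun i => c i * ε)]
        simp
      · simp only [dif_neg hh]
        simp

lemma exists_solution (n : ℕ) (a b c u : Fin n → ℝ)
    (hfeas : ∃ x, feasible n a b u x) : ∃ x, isSolution n a b c u x := by
  obtain ⟨x0, hx0⟩ := hfeas
  have hclosed : IsClosed {x : Fin n → ℝ | feasible n a b u x} := by
    have heq : {x : Fin n → ℝ | feasible n a b u x} =
        (⋂ i, ({x : Fin n → ℝ | 0 ≤ x i} ∩ {x | x i ≤ u i})) ∩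
        (⋂ i, ({x : Fin n → ℝ | a i ≤ ∑ j ∈ Finset.Iic i, x j} ∩
          {x | ∑ j ∈ Finset.Iic i, x j ≤ b i})) := by
      ext z
      simp only [Set.mem_setOf_eq, Set.mem_inter_iff, Set.mem_iInter, feasible]
      try tauto
    rw [heq]
    have hc1 : ∀ i : Fin n, Continuous fun x : Fin n → ℝ => ∑ j ∈ Finset.Iic i, x j :=
      fun i => continuous_finset_sum _ fun j _ => continuous_apply j
    exact IsClosed.inter
      (isClosed_iInter fun i => IsClosed.inter
        (isClosed_le continuous_const (continuous_apply i))
        (isClosed_le (continuous_apply i) continuous_const))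
      (isClosed_iInter fun i => IsClosed.inter
        (isClosed_le continuous_const (hc1 i))
        (isClosed_le (hc1 i) continuous_const))
  have hsub : {x : Fin n → ℝ | feasible n a b u x} ⊆ Set.Icc 0 u := fun z hz =>
    ⟨fun i => (hz.1 i).1, fun i => (hz.1 i).2⟩
  have hcomp : IsCompact {x : Fin n → ℝ | feasible n a b u x} :=
    (isCompact_Icc).of_isClosed_subset hclosed hsub
  have hcont : Continuous fun x : Fin n → ℝ => ∑ i, c i * x i :=
    continuous_finset_sum _ fun i _ => continuous_const.mul (continuous_apply i)
  obtain ⟨x, hxF, hmin⟩ := hcomp.exists_isMinOn ⟨x0, hx0⟩ hcont.continuousOn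
  exact ⟨x, hxF, fun y hy => hmin hy⟩

set_option maxHeartbeats 1600000 in
lemma sol_unique (n : ℕ) (a b c u : Fin n → ℝ)
    (hcinj : Function.Injective c) (hc0 : ∀ i, c i ≠ 0)
    {x y : Fin n → ℝ} (hx : isSolution n a b c u x) (hy : isSolution n a b c u y) : x = y := by
  by_contra hne
  set Tx := T n x with hTxdef
  set Ty := T n y with hTydef
  have hxs : ∀ i : Fin n, Tx (i.1+1) = Tx i.1 + x i := fun i => by
    simpa using T_succ n x i.2
  have hys : ∀ i : Fin n, Ty (i.1+1) = Ty i.1 + y i := fun i => by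
    simpa using T_succ n y i.2
  have haxb : ∀ i : Fin n, a i ≤ Tx (i.1+1) ∧ Tx (i.1+1) ≤ b i := fun i => by
    rw [hTxdef, ← sum_Iic_eq_T]; exact hx.1.2 i
  have hayb : ∀ i : Fin n, a i ≤ Ty (i.1+1) ∧ Ty (i.1+1) ≤ b i := fun i => by
    rw [hTydef, ← sum_Iic_eq_T]; exact hy.1.2 i
  -- the lattice min and max points
  set m : Fin n → ℝ := fun i => min (Tx (i.1+1)) (Ty (i.1+1)) - min (Tx i.1) (Ty i.1) with hmdef
  set w : Fin n → ℝ := fun i => max (Tx (i.1+1)) (Ty (i.1+1)) - max (Tx i.1) (Ty i.1) with hwdef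
  have hTm : ∀ j, j ≤ n → T n m j = min (Tx j) (Ty j) := by
    intro j
    induction j with
    | zero => intro _; rw [T_zero, hTxdef, hTydef, T_zero, T_zero]; simp
    | succ j ih =>
      intro hjn
      have hjn' : j < n := by omega
      rw [T_succ n m hjn', ih (by omega)]
      have : m ⟨j, hjn'⟩ = min (Tx (j+1)) (Ty (j+1)) - min (Tx j) (Ty j) := rfl
      rw [this]; ring
  have hTw : ∀ j, j ≤ n → T n w j = max (Tx j) (Ty j) := by
    intro j
    induction j with
    | zero => intro _; rw [T_zero, hTxdef, hTydef, T_zero, T_zero]; simp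
    | succ j ih =>
      intro hjn
      have hjn' : j < n := by omega
      rw [T_succ n w hjn', ih (by omega)]
      have : w ⟨j, hjn'⟩ = max (Tx (j+1)) (Ty (j+1)) - max (Tx j) (Ty j) := rfl
      rw [this]; ring
  have hmfeas : feasible n a b u m := by
    constructor
    · intro i
      have h1 := hxs i; have h2 := hys i
      have hx0 := (hx.1.1 i).1; have hxu := (hx.1.1 i).2
      have hy0 := (hy.1.1 i).1; have hyu := (hy.1.1 i).2
      constructor
      · have : min (Tx i.1) (Ty i.1) ≤ min (Tx (i.1+1)) (Ty (i.1+1)) :=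
          min_le_min (by linarith) (by linarith)
        simp only [hmdef]; linarith
      · rcases le_total (Tx i.1) (Ty i.1) with h | h
        · have e1 : min (Tx i.1) (Ty i.1) = Tx i.1 := min_eq_left h
          have e2 : min (Tx (i.1+1)) (Ty (i.1+1)) ≤ Tx (i.1+1) := min_le_left _ _
          simp only [hmdef]; linarith
        · have e1 : min (Tx i.1) (Ty i.1) = Ty i.1 := min_eq_right h
          have e2 : min (Tx (i.1+1)) (Ty (i.1+1)) ≤ Ty (i.1+1) := min_le_right _ _
          simp only [hmdef]; linarith
    · intro i
      rw [sum_Iic_eq_T, hTm (i.1+1) i.2]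
      exact ⟨le_min (haxb i).1 (hayb i).1, min_le_of_left_le (haxb i).2⟩
  have hwfeas : feasible n a b u w := by
    constructor
    · intro i
      have h1 := hxs i; have h2 := hys i
      have hx0 := (hx.1.1 i).1; have hxu := (hx.1.1 i).2
      have hy0 := (hy.1.1 i).1; have hyu := (hy.1.1 i).2
      constructor
      · have : max (Tx i.1) (Ty i.1) ≤ max (Tx (i.1+1)) (Ty (i.1+1)) :=
          max_le_max (by linarith) (by linarith)
        simp only [hwdef]; linarith
      · rcases le_total (Tx i.1) (Ty i.1) with h | h
        · have e1 : max (Tx i.1) (Ty i.1) = Ty i.1 := max_eq_right h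
          have e2 : max (Tx (i.1+1)) (Ty (i.1+1)) ≤ max (Tx (i.1+1)) (Ty (i.1+1)) := le_refl _
          have e3 : max (Tx (i.1+1)) (Ty (i.1+1)) ≤ max (Tx i.1 + u i) (Ty i.1 + u i) :=
            max_le_max (by linarith) (by linarith)
          have e4 : max (Tx i.1 + u i) (Ty i.1 + u i) = max (Tx i.1) (Ty i.1) + u i := by
            rcases le_total (Tx i.1) (Ty i.1) with hh | hh
            · rw [max_eq_right hh, max_eq_right (by linarith : Tx i.1 + u i ≤ Ty i.1 + u i)]
            · rw [max_eq_left hh, max_eq_left (by linarith : Ty i.1 + u i ≤ Tx i.1 + u i)]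
          simp only [hwdef]; linarith
        · have e3 : max (Tx (i.1+1)) (Ty (i.1+1)) ≤ max (Tx i.1 + u i) (Ty i.1 + u i) :=
            max_le_max (by linarith) (by linarith)
          have e4 : max (Tx i.1 + u i) (Ty i.1 + u i) = max (Tx i.1) (Ty i.1) + u i := by
            rcases le_total (Tx i.1) (Ty i.1) with hh | hh
            · rw [max_eq_right hh, max_eq_right (by linarith : Tx i.1 + u i ≤ Ty i.1 + u i)]
            · rw [max_eq_left hh, max_eq_left (by linarith : Ty i.1 + u i ≤ Tx i.1 + u i)]
          simp only [hwdef]; linarith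
    · intro i
      rw [sum_Iic_eq_T, hTw (i.1+1) i.2]
      exact ⟨le_max_of_le_left (haxb i).1, max_le (haxb i).2 (hayb i).2⟩
  -- objective values
  have hxyobj : ∑ i, c i * x i = ∑ i, c i * y i :=
    le_antisymm (hx.2 y hy.1) (hy.2 x hx.1)
  have hmwobj : ∑ i, c i * m i + ∑ i, c i * w i = ∑ i, c i * x i + ∑ i, c i * y i := by
    rw [← Finset.sum_add_distrib, ← Finset.sum_add_distrib]
    refine Finset.sum_congr rfl fun i _ => ?_
    have e1 := min_add_max (Tx i.1) (Ty i.1)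
    have e2 := min_add_max (Tx (i.1+1)) (Ty (i.1+1))
    have e3 := hxs i; have e4 := hys i
    have : m i + w i = x i + y i := by simp only [hmdef, hwdef]; linarith
    calc c i * m i + c i * w i = c i * (m i + w i) := by ring
      _ = c i * (x i + y i) := by rw [this]
      _ = c i * x i + c i * y i := by ring
  have hmx : ∑ i, c i * x i ≤ ∑ i, c i * m i := hx.2 m hmfeas
  have hwx : ∑ i, c i * x i ≤ ∑ i, c i * w i := hx.2 w hwfeas
  have hmobj : ∑ i, c i * m i = ∑ i, c i * x i := by linarith
  have hwobj : ∑ i, c i * w i = ∑ i, c i * x i := by linarith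
  -- the partial sums differ somewhere
  have hTne : ∃ j, j ≤ n ∧ Tx j ≠ Ty j := by
    by_contra hcon
    push_neg at hcon
    apply hne
    funext i
    have h1 := hcon (i.1+1) i.2
    have h2 := hcon i.1 (le_of_lt (lt_of_lt_of_le i.2 (le_refl n)))
    have := hxs i; have := hys i
    linarith
  obtain ⟨j0, hj0n, hj0ne⟩ := hTne
  have hj0pos : 0 < j0 := by
    rcases Nat.eq_zero_or_pos j0 with h | h
    · exfalso; apply hj0ne; rw [h, hTxdef, hTydef, T_zero, T_zero]
    · exact h
  set E : Finset ℕ := (Finset.range n).filter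
    (fun j => min (Tx (j+1)) (Ty (j+1)) < max (Tx (j+1)) (Ty (j+1))) with hEdef
  set i0 : ℕ := j0 - 1 with hi0def
  have hi0E : i0 ∈ E := by
    rw [hEdef, Finset.mem_filter, Finset.mem_range]
    have h1 : i0 + 1 = j0 := by omega
    rw [h1]
    exact ⟨by omega, min_lt_max.2 hj0ne⟩
  have hEne : E.Nonempty := ⟨i0, hi0E⟩
  set v : ℝ := E.inf' hEne (fun j => max (Tx (j+1)) (Ty (j+1)) - min (Tx (j+1)) (Ty (j+1)))
    with hvdef
  have hv0 : 0 < v := by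
    rw [hvdef, Finset.lt_inf'_iff]
    intro j hj
    exact sub_pos.2 (Finset.mem_filter.1 hj).2
  have hvle : ∀ j ∈ E, v ≤ max (Tx (j+1)) (Ty (j+1)) - min (Tx (j+1)) (Ty (j+1)) :=
    fun j hj => Finset.inf'_le _ hj
  -- the run [p, q] of E containing i0
  obtain ⟨p, q, hpq, hrun, hpbd, hq1⟩ :
      ∃ p q : ℕ, p ≤ q ∧ (∀ j, p ≤ j → j ≤ q → j ∈ E) ∧
        (p = 0 ∨ (0 < p ∧ (p - 1) ∉ E)) ∧ (q + 1) ∉ E := by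
    have hexq : ∃ k, (i0 + k) ∉ E := by
      refine ⟨n, fun hmem => ?_⟩
      have := Finset.mem_range.1 (Finset.mem_filter.1 hmem).1
      omega
    obtain ⟨k1, hk1spec, hk1min⟩ : ∃ k1, (i0 + k1) ∉ E ∧ ∀ l, l < k1 → (i0 + l) ∈ E :=
      ⟨Nat.find hexq, Nat.find_spec hexq, fun l hl => not_not.1 (Nat.find_min hexq hl)⟩
    have hk1pos : 0 < k1 := by
      rcases Nat.eq_zero_or_pos k1 with h | h
      · exfalso; apply hk1spec; rw [h]; simpa using hi0E
      · exact h
    have hexp : ∃ k, i0 < k ∨ (i0 - k) ∉ E := ⟨i0 + 1, Or.inl (by omega)⟩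
    obtain ⟨k2, hk2spec, hk2min⟩ :
        ∃ k2, (i0 < k2 ∨ (i0 - k2) ∉ E) ∧ ∀ l, l < k2 → l ≤ i0 ∧ (i0 - l) ∈ E := by
      refine ⟨Nat.find hexp, Nat.find_spec hexp, fun l hl => ?_⟩
      have := Nat.find_min hexp hl
      push_neg at this
      exact this
    have hk2pos : 0 < k2 := by
      rcases Nat.eq_zero_or_pos k2 with h | h
      · exfalso
        rcases hk2spec with hc | hc
        · omega
        · apply hc; rw [h]; simpa using hi0E
      · exact h
    have hk2i0 : k2 - 1 ≤ i0 := (hk2min (k2-1) (by omega)).1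
    refine ⟨i0 - (k2 - 1), i0 + k1 - 1, by omega, ?_, ?_, ?_⟩
    · intro j h1 h2
      rcases le_or_gt j i0 with hj | hj
      · have hlt : i0 - j < k2 := by omega
        have := (hk2min (i0 - j) hlt).2
        have heq : i0 - (i0 - j) = j := by omega
        rwa [heq] at this
      · have hlt : j - i0 < k1 := by omega
        have := hk1min (j - i0) hlt
        have heq : i0 + (j - i0) = j := by omega
        rwa [heq] at this
    · rcases hk2spec with hc | hc
      · left; omega
      · rcases Nat.eq_zero_or_pos (i0 - (k2 - 1)) with h0 | h0
        · left; exact h0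
        · right
          refine ⟨h0, ?_⟩
          have heq : i0 - (k2 - 1) - 1 = i0 - k2 := by omega
          rwa [heq]
    · have heq : i0 + k1 - 1 + 1 = i0 + k1 := by omega
      rwa [heq]
  have hqE : q ∈ E := hrun q hpq (le_refl q)
  have hqn : q < n := Finset.mem_range.1 (Finset.mem_filter.1 hqE).1
  have hpn : p < n := by omega
  -- equal partial sums just before p and just after q+1
  have hpEq : min (Tx p) (Ty p) = max (Tx p) (Ty p) := by
    rcases hpbd with hp0 | ⟨hp0, hp1notE⟩
    · rw [hp0, hTxdef, hTydef, T_zero, T_zero]; simp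
    · have hcond : ¬(min (Tx (p-1+1)) (Ty (p-1+1)) < max (Tx (p-1+1)) (Ty (p-1+1))) := by
        intro hc
        exact hp1notE (Finset.mem_filter.2 ⟨Finset.mem_range.2 (by omega), hc⟩)
      have heq : p - 1 + 1 = p := by omega
      rw [heq] at hcond
      exact le_antisymm min_le_max (not_lt.1 hcond)
  have hq2Eq : ∀ h : q + 1 < n, min (Tx (q+2)) (Ty (q+2)) = max (Tx (q+2)) (Ty (q+2)) := by
    intro h
    have hcond : ¬(min (Tx (q+1+1)) (Ty (q+1+1)) < max (Tx (q+1+1)) (Ty (q+1+1))) := by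
      intro hc
      exact hq1 (Finset.mem_filter.2 ⟨Finset.mem_range.2 h, hc⟩)
    exact le_antisymm min_le_max (not_lt.1 hcond)
  -- bounds needed for the two perturbations
  have hpE : p ∈ E := hrun p (le_refl p) hpq
  have hvp : v ≤ max (Tx (p+1)) (Ty (p+1)) - min (Tx (p+1)) (Ty (p+1)) := hvle p hpE
  have hvq : v ≤ max (Tx (q+1)) (Ty (q+1)) - min (Tx (q+1)) (Ty (q+1)) := hvle q hqE
  have hmp : m ⟨p, hpn⟩ = min (Tx (p+1)) (Ty (p+1)) - min (Tx p) (Ty p) := rfl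
  have hwp : w ⟨p, hpn⟩ = max (Tx (p+1)) (Ty (p+1)) - max (Tx p) (Ty p) := rfl
  -- perturbation of m : move v from q+1 to p
  have hbp_m : 0 ≤ m ⟨p, hpn⟩ + v ∧ m ⟨p, hpn⟩ + v ≤ u ⟨p, hpn⟩ := by
    constructor
    · have := (hmfeas.1 ⟨p, hpn⟩).1; linarith
    · have hwu := (hwfeas.1 ⟨p, hpn⟩).2
      rw [hwp] at hwu
      rw [hmp]
      linarith [hpEq]
  have hbq_m : ∀ h : q + 1 < n, 0 ≤ m ⟨q+1, h⟩ - v ∧ m ⟨q+1, h⟩ - v ≤ u ⟨q+1, h⟩ := by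
    intro h
    have hmq : m ⟨q+1, h⟩ = min (Tx (q+2)) (Ty (q+2)) - min (Tx (q+1)) (Ty (q+1)) := rfl
    have hmono : max (Tx (q+1)) (Ty (q+1)) ≤ max (Tx (q+2)) (Ty (q+2)) := by
      have e1 := hxs ⟨q+1, h⟩
      have e2 := hys ⟨q+1, h⟩
      have e3 := (hx.1.1 ⟨q+1, h⟩).1
      have e4 := (hy.1.1 ⟨q+1, h⟩).1
      exact max_le_max (by simp at e1 ⊢; linarith) (by simp at e2 ⊢; linarith)
    constructor
    · rw [hmq]; linarith [hq2Eq h]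
    · have := (hmfeas.1 ⟨q+1, h⟩).2; linarith [hv0]
  have hsum_m : ∀ j (h : j < n), p ≤ j → j ≤ q →
      a ⟨j, h⟩ ≤ T n m (j+1) + v ∧ T n m (j+1) + v ≤ b ⟨j, h⟩ := by
    intro j h h1 h2
    have hjE := hrun j h1 h2
    have hvj := hvle j hjE
    rw [hTm (j+1) (by omega)]
    have hja := (haxb ⟨j, h⟩).1
    have hjb := (haxb ⟨j, h⟩).2
    have hja' := (hayb ⟨j, h⟩).1
    have hjb' := (hayb ⟨j, h⟩).2
    simp only [Fin.val_mk] at hja hjb hja' hjb'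
    constructor
    · have : a ⟨j, h⟩ ≤ min (Tx (j+1)) (Ty (j+1)) := le_min hja hja'
      linarith
    · have : max (Tx (j+1)) (Ty (j+1)) ≤ b ⟨j, h⟩ := max_le hjb hjb'
      linarith
  obtain ⟨hzfeas, hzobj⟩ := pert n a b c u m hmfeas p q hpq hqn hpn v hbp_m hbq_m hsum_m
  -- perturbation of w : move v from p to q+1 (ε = -v)
  have hbp_w : 0 ≤ w ⟨p, hpn⟩ + (-v) ∧ w ⟨p, hpn⟩ + (-v) ≤ u ⟨p, hpn⟩ := by
    constructor
    · have hm0 := (hmfeas.1 ⟨p, hpn⟩).1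
      rw [hmp] at hm0
      rw [hwp]
      linarith [hpEq]
    · have := (hwfeas.1 ⟨p, hpn⟩).2; linarith [hv0]
  have hbq_w : ∀ h : q + 1 < n, 0 ≤ w ⟨q+1, h⟩ - (-v) ∧ w ⟨q+1, h⟩ - (-v) ≤ u ⟨q+1, h⟩ := by
    intro h
    have hwq : w ⟨q+1, h⟩ = max (Tx (q+2)) (Ty (q+2)) - max (Tx (q+1)) (Ty (q+1)) := rfl
    have hmq : m ⟨q+1, h⟩ = min (Tx (q+2)) (Ty (q+2)) - min (Tx (q+1)) (Ty (q+1)) := rfl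
    constructor
    · have := (hwfeas.1 ⟨q+1, h⟩).1; linarith [hv0]
    · have hmu := (hmfeas.1 ⟨q+1, h⟩).2
      rw [hmq] at hmu
      rw [hwq]
      linarith [hq2Eq h]
  have hsum_w : ∀ j (h : j < n), p ≤ j → j ≤ q →
      a ⟨j, h⟩ ≤ T n w (j+1) + (-v) ∧ T n w (j+1) + (-v) ≤ b ⟨j, h⟩ := by
    intro j h h1 h2
    have hjE := hrun j h1 h2
    have hvj := hvle j hjE
    rw [hTw (j+1) (by omega)]
    have hja := (haxb ⟨j, h⟩).1
    have hjb := (haxb ⟨j, h⟩).2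
    have hja' := (hayb ⟨j, h⟩).1
    have hjb' := (hayb ⟨j, h⟩).2
    simp only [Fin.val_mk] at hja hjb hja' hjb'
    constructor
    · have : a ⟨j, h⟩ ≤ min (Tx (j+1)) (Ty (j+1)) := le_min hja hja'
      linarith
    · have : max (Tx (j+1)) (Ty (j+1)) ≤ b ⟨j, h⟩ := max_le hjb hjb'
      linarith
  obtain ⟨hz'feas, hz'obj⟩ := pert n a b c u w hwfeas p q hpq hqn hpn (-v) hbp_w hbq_w hsum_w
  -- optimality gives the two inequalities
  clear_value Tx Ty m w v
  have hle1 : ∑ i, c i * m i ≤ ∑ i, c i * m i + c ⟨p, hpn⟩ * v -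
      (if h : q+1 < n then c ⟨q+1, h⟩ * v else 0) := by
    rw [← hzobj, hmobj]
    exact hx.2 _ hzfeas
  have hle2 : ∑ i, c i * w i ≤ ∑ i, c i * w i + c ⟨p, hpn⟩ * (-v) -
      (if h : q+1 < n then c ⟨q+1, h⟩ * (-v) else 0) := by
    rw [← hz'obj, hwobj]
    exact hx.2 _ hz'feas
  by_cases hcase : q + 1 < n
  · rw [dif_pos hcase] at hle1 hle2
    have hceq : c ⟨p, hpn⟩ = c ⟨q+1, hcase⟩ := by nlinarith [hv0]
    have := hcinj hceq
    have : p = q + 1 := congrArg Fin.val this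
    omega
  · rw [dif_neg hcase] at hle1 hle2
    have hceq : c ⟨p, hpn⟩ = 0 := by nlinarith [hv0]
    exact hc0 _ hceq

theorem unique_solution_of_distinct_nonzero_costs
    (n : ℕ) (a b c u : Fin n → ℝ)
    (hu : ∀ i, 0 ≤ u i) (hab : ∀ i, a i ≤ b i)
    (hcinj : Function.Injective c) (hc0 : ∀ i, c i ≠ 0)
    (hfeas : ∃ x, feasible n a b u x) :
    ∃! x, isSolution n a b c u x := by
  obtain ⟨x, hxsol⟩ := exists_solution n a b c u hfeas
  exact ⟨x, hxsol, fun y hy => sol_unique n a b c u hcinj hc0 hy hxsol⟩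
end

section
/- (Exchange/swap improvement) Let x̂ be feasible for (P), let i₁ < k be indices with c_{i₁} > c_k, x̂_{i₁} > 0, x̂_k < u_k, and suppose ∑_{j=1}^{i} x̂_j − δ ≥ a_i for all i₁ ≤ i < k for some δ with 0 < δ ≤ min{x̂_{i₁}, u_k − x̂_k}. Then the point x obtained from x̂ by decreasing coordinate i₁ by δ and increasing coordinate k by δ is feasible for (P) and has strictly smaller objective value: ∑ c_j x_j = ∑ c_j x̂_j + δ·(c_k − c_{i₁}) < ∑ c_j x̂_j. -/
open Finset

theorem exchange_improvement
    (n : ℕ) (a b c u : Fin n → ℝ)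
    (hu : ∀ i, 0 ≤ u i) (hab : ∀ i, a i ≤ b i)
    (xhat : Fin n → ℝ) (hfeas : feasible n a b u xhat)
    (i₁ k : Fin n) (hik : i₁ < k) (hc : c k < c i₁)
    (hx1 : 0 < xhat i₁) (hxk : xhat k < u k)
    (δ : ℝ) (hδ : 0 < δ) (hδ1 : δ ≤ xhat i₁) (hδ2 : δ ≤ u k - xhat k)
    (hsum : ∀ i, i₁ ≤ i → i < k → a i ≤ (∑ j ∈ Finset.Iic i, xhat j) - δ)
    (x : Fin n → ℝ)
    (hx : x = Function.update (Function.update xhat i₁ (xhat i₁ - δ)) k (xhat k + δ)) :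
    feasible n a b u x ∧
    (∑ i, c i * x i = ∑ i, c i * xhat i + δ * (c k - c i₁)) ∧
    ∑ i, c i * x i < ∑ i, c i * xhat i := by
  have hne : i₁ ≠ k := ne_of_lt hik
  have hxval : ∀ j, x j = xhat j + (if j = i₁ then -δ else 0) + (if j = k then δ else 0) := by
    intro j
    subst hx
    by_cases hj : j = k
    · subst hj
      simp [Function.update, hne.symm]
    · by_cases hj2 : j = i₁
      · subst hj2
        simp only [Function.update, hj]
        simp
        ring
      · simp [Function.update, hj, hj2]
  have hsumIic : ∀ i : Fin n, ∑ j ∈ Finset.Iic i, x j =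
      (∑ j ∈ Finset.Iic i, xhat j) + (if i₁ ≤ i then -δ else 0) + (if k ≤ i then δ else 0) := by
    intro i
    simp only [hxval]
    rw [Finset.sum_add_distrib, Finset.sum_add_distrib,
      Finset.sum_ite_eq' (Finset.Iic i) i₁ (fun _ => -δ),
      Finset.sum_ite_eq' (Finset.Iic i) k (fun _ => δ)]
    simp [Finset.mem_Iic]
  have hbnd := hfeas.1
  have hps := hfeas.2
  have hfeasx : feasible n a b u x := by
    constructor
    · intro j
      rw [hxval j]
      by_cases hj : j = k
      · have hj2 : j ≠ i₁ := fun h => hne (h ▸ hj)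
        rw [if_neg hj2, if_pos hj, hj]
        constructor
        · have := (hbnd k).1; linarith
        · linarith
      · by_cases hj2 : j = i₁
        · rw [if_pos hj2, if_neg hj, hj2]
          constructor
          · linarith
          · have := (hbnd i₁).2; linarith [hδ.le]
        · simp only [if_neg hj, if_neg hj2, add_zero]
          exact hbnd j
    · intro i
      rw [hsumIic i]
      by_cases hk : k ≤ i
      · have hi1 : i₁ ≤ i := le_trans hik.le hk
        simp only [if_pos hi1, if_pos hk]
        have := hps i
        constructor <;> linarith [this.1, this.2]
      · by_cases hi1 : i₁ ≤ i
        · simp only [if_pos hi1, if_neg hk]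
          have hik' : i < k := lt_of_not_ge hk
          constructor
          · have := hsum i hi1 hik'; linarith
          · have := (hps i).2; linarith
        · simp only [if_neg hi1, if_neg hk]
          have := hps i
          constructor <;> linarith [this.1, this.2]
  have hobj : ∑ i, c i * x i = ∑ i, c i * xhat i + δ * (c k - c i₁) := by
    simp only [hxval, mul_add]
    rw [Finset.sum_add_distrib, Finset.sum_add_distrib]
    have h1 : ∑ j, c j * (if j = i₁ then -δ else 0) = c i₁ * (-δ) := by
      rw [Finset.sum_eq_single i₁]
      · simp
      · intro b _ hb; simp [hb]
      · simp
    have h2 : ∑ j, c j * (if j = k then δ else 0) = c k * δ := by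
      rw [Finset.sum_eq_single k]
      · simp
      · intro b _ hb; simp [hb]
      · simp
    rw [h1, h2]; ring
  refine ⟨hfeasx, hobj, ?_⟩
  rw [hobj]
  nlinarith [hδ, hc]
end

section
/- If x̂ is a solution of (P) and x̂' is a solution of the reduced problem (P') obtained by fixing coordinate k = σ(1) at value x̂_k (with the modified bounds a'_i, b'_i), then the point obtained by inserting x̂_k into x̂' at position k is a solution of (P). -/
open Finset

lemma sum_upd {n : ℕ} (x : Fin n → ℝ) (k i : Fin n) (v : ℝ) (h : k ≤ i) :
    ∑ j ∈ Finset.Iic i, Function.update x k v j = v - x k + ∑ j ∈ Finset.Iic i, x j := by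
  rw [Finset.sum_update_of_mem (Finset.mem_Iic.mpr h),
      Finset.sum_sdiff_eq_sub (Finset.singleton_subset_iff.mpr (Finset.mem_Iic.mpr h)),
      Finset.sum_singleton]
  ring

lemma sum_upd_not {n : ℕ} (x : Fin n → ℝ) (k i : Fin n) (v : ℝ) (h : ¬ k ≤ i) :
    ∑ j ∈ Finset.Iic i, Function.update x k v j = ∑ j ∈ Finset.Iic i, x j :=
  Finset.sum_congr rfl fun j hj =>
    Function.update_of_ne (by rintro rfl; exact h (Finset.mem_Iic.mp hj)) _ _

lemma Iic_succ' {n : ℕ} (k i : Fin n) (h : (i : ℕ) + 1 = (k : ℕ)) :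
    Finset.Iic k = insert k (Finset.Iic i) := by
  ext j
  simp only [Finset.mem_Iic, Finset.mem_insert, Fin.le_def, Fin.ext_iff]
  omega

lemma cost_upd {n : ℕ} (c x : Fin n → ℝ) (k : Fin n) (v : ℝ) :
    ∑ i, c i * Function.update x k v i = c k * v - c k * x k + ∑ i, c i * x i := by
  have h : (fun i => c i * Function.update x k v i)
      = Function.update (fun i => c i * x i) k (c k * v) := by
    funext i
    rcases eq_or_ne i k with rfl | hik
    · simp
    · simp [hik]
  rw [h, Finset.sum_update_of_mem (Finset.mem_univ k),
      Finset.sum_sdiff_eq_sub (Finset.singleton_subset_iff.mpr (Finset.mem_univ k)),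
      Finset.sum_singleton]
  ring

theorem insertion_gives_solution
    (n : ℕ) (hn : 0 < n) (a b c u : Fin n → ℝ)
    (hu : ∀ i, 0 ≤ u i) (hab : ∀ i, a i ≤ b i)
    (σ : Equiv.Perm (Fin n)) (hσ : Monotone fun j => c (σ j))
    (xhat : Fin n → ℝ) (hxhat : isSolution n a b c u xhat)
    (k : Fin n) (hk : k = σ ⟨0, hn⟩)
    (xhat' : Fin n → ℝ)
    (hxhat' : redSolution n (redA n a k (xhat k)) (redB n b k (xhat k)) c u k xhat') :
    isSolution n a b c u (Function.update xhat' k (xhat k)) := by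
  obtain ⟨hf, hopt⟩ := hxhat
  obtain ⟨⟨hz0, hzb, hzc⟩, hropt⟩ := hxhat'
  have hzfeas : feasible n a b u (Function.update xhat' k (xhat k)) := by
    constructor
    · intro i
      rcases eq_or_ne i k with rfl | hik
      · simpa using hf.1 i
      · rw [Function.update_of_ne hik]; exact hzb i hik
    · intro i
      rcases lt_trichotomy i k with hik | rfl | hik
      · rw [sum_upd_not _ _ _ _ (not_le.mpr hik)]
        have hcon := hzc i (ne_of_lt hik)
        simp only [redA, redB] at hcon
        by_cases h1 : (i : ℕ) + 1 = (k : ℕ)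
        · rw [if_pos h1, if_pos h1] at hcon
          exact ⟨le_trans (le_max_left _ _) hcon.1, le_trans hcon.2 (min_le_left _ _)⟩
        · rw [if_neg h1, if_neg (not_lt.mpr (le_of_lt hik)), if_neg h1,
            if_neg (not_lt.mpr (le_of_lt hik))] at hcon
          exact hcon
      · rw [sum_upd _ _ _ _ (le_refl _), hz0, sub_zero]
        by_cases hk0 : (i : ℕ) = 0
        · have hIk : Finset.Iic i = {i} := by
            ext j
            simp only [Finset.mem_Iic, Finset.mem_singleton, Fin.le_def, Fin.ext_iff]
            omega
          have hfk := hf.2 i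
          rw [hIk, Finset.sum_singleton] at hfk ⊢
          rw [hz0]
          constructor <;> linarith [hfk.1, hfk.2]
        · set p : Fin n := ⟨(i : ℕ) - 1, by omega⟩ with hp
          have hpv : (p : ℕ) = (i : ℕ) - 1 := by rw [hp]
          have hp1 : (p : ℕ) + 1 = (i : ℕ) := by omega
          have hpk : p ≠ i := by
            intro h; rw [Fin.ext_iff, hpv] at h; omega
          have hcon := hzc p hpk
          simp only [redA, redB, if_pos hp1] at hcon
          have hsum : ∑ j ∈ Finset.Iic i, xhat' j = ∑ j ∈ Finset.Iic p, xhat' j := by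
            rw [Iic_succ' i p hp1, Finset.sum_insert (by
              intro hm
              have := Fin.le_def.mp (Finset.mem_Iic.mp hm)
              omega), hz0, zero_add]
          rw [hsum]
          constructor
          · have := le_trans (le_max_right _ _) hcon.1; linarith
          · have := le_trans hcon.2 (min_le_right _ _); linarith
      · rw [sum_upd _ _ _ _ (le_of_lt hik), hz0, sub_zero]
        have hcon := hzc i (ne_of_gt hik)
        have h1 : ¬ ((i : ℕ) + 1 = (k : ℕ)) := by
          have := Fin.lt_def.mp hik; omega
        simp only [redA, redB, if_neg h1, if_pos hik] at hcon
        constructor <;> linarith [hcon.1, hcon.2]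
  refine ⟨hzfeas, ?_⟩
  intro y hy
  have hwfeas : redFeasible n (redA n a k (xhat k)) (redB n b k (xhat k)) u k
      (Function.update xhat k 0) := by
    refine ⟨Function.update_self _ _ _, fun i hik => ?_, fun i hik => ?_⟩
    · rw [Function.update_of_ne hik]; exact hf.1 i
    · rcases lt_trichotomy i k with h | rfl | h
      · rw [sum_upd_not _ _ _ _ (not_le.mpr h)]
        simp only [redA, redB]
        by_cases h1 : (i : ℕ) + 1 = (k : ℕ)
        · rw [if_pos h1, if_pos h1]
          have hfi := hf.2 i
          have hfk := hf.2 k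
          rw [Iic_succ' k i h1, Finset.sum_insert
            (fun hm => absurd (Finset.mem_Iic.mp hm) (not_le.mpr h))] at hfk
          constructor
          · exact max_le hfi.1 (by linarith [hfk.1])
          · exact le_min hfi.2 (by linarith [hfk.2])
        · rw [if_neg h1, if_neg (not_lt.mpr (le_of_lt h)), if_neg h1,
            if_neg (not_lt.mpr (le_of_lt h))]
          exact hf.2 i
      · exact absurd rfl hik
      · rw [sum_upd _ _ _ _ (le_of_lt h)]
        have h1 : ¬ ((i : ℕ) + 1 = (k : ℕ)) := by
          have := Fin.lt_def.mp h; omega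
        simp only [redA, redB, if_neg h1, if_pos h]
        have hfi := hf.2 i
        constructor <;> linarith [hfi.1, hfi.2]
  have h1 := hropt _ hwfeas
  rw [cost_upd] at h1
  rw [cost_upd, hz0]
  have h2 := hopt y hy
  linarith
end

section
/- When the c_i are pairwise distinct and nonzero, the unique solution of (P) depends on the cost vector c only through the order permutation σ and the signs of the c_i: if c and c' induce the same strict ordering of indices and sign pattern, then (P) with costs c and (P) with costs c' (and identical constraint data a, b, u) have the same unique solution. -/
open Finset

namespace StorageLP
variable {n : ℕ}

noncomputable def pre (z : Fin n → ℝ) (k : Fin n) : ℝ := ∑ j ∈ Finset.Iic k, z j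

def P (c z : Fin n → ℝ) : Prop :=
  (∃ i j, i < j ∧ 0 < z i ∧ z j < 0 ∧ (∀ k, i ≤ k → k < j → 0 < pre z k) ∧ c i < c j) ∨
  (∃ i j, i < j ∧ z i < 0 ∧ 0 < z j ∧ (∀ k, i ≤ k → k < j → pre z k < 0) ∧ c j < c i) ∨
  (∃ i, 0 < z i ∧ (∀ k, i ≤ k → 0 < pre z k) ∧ c i < 0) ∨
  (∃ i, z i < 0 ∧ (∀ k, i ≤ k → pre z k < 0) ∧ 0 < c i)

def Sub (w z : Fin n → ℝ) : Prop :=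
  (∀ k, 0 < w k → 0 < z k) ∧ (∀ k, w k < 0 → z k < 0) ∧
  (∀ k, 0 < pre w k → 0 < pre z k) ∧ (∀ k, pre w k < 0 → pre z k < 0)


lemma P_sub {w z c : Fin n → ℝ} (hsub : Sub w z) (h : P c w) : P c z := by
  obtain ⟨h1, h2, h3, h4⟩ := hsub
  rcases h with ⟨i, j, hij, ha, hb, hp, hc⟩ | ⟨i, j, hij, ha, hb, hp, hc⟩ |
    ⟨i, ha, hp, hc⟩ | ⟨i, ha, hp, hc⟩
  · exact Or.inl ⟨i, j, hij, h1 _ ha, h2 _ hb, fun k hk1 hk2 => h3 _ (hp k hk1 hk2), hc⟩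
  · exact Or.inr (Or.inl ⟨i, j, hij, h2 _ ha, h1 _ hb, fun k hk1 hk2 => h4 _ (hp k hk1 hk2), hc⟩)
  · exact Or.inr (Or.inr (Or.inl ⟨i, h1 _ ha, fun k hk => h3 _ (hp k hk), hc⟩))
  · exact Or.inr (Or.inr (Or.inr ⟨i, h2 _ ha, fun k hk => h4 _ (hp k hk), hc⟩))


lemma pre_neg (z : Fin n → ℝ) (k : Fin n) : pre (-z) k = - pre z k := by
  simp [pre]


lemma P_neg {c z : Fin n → ℝ} (h : P (-c) (-z)) : P c z := by
  rcases h with ⟨i, j, hij, ha, hb, hp, hc⟩ | ⟨i, j, hij, ha, hb, hp, hc⟩ |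
    ⟨i, ha, hp, hc⟩ | ⟨i, ha, hp, hc⟩
  · refine Or.inr (Or.inl ⟨i, j, hij, ?_, ?_, ?_, ?_⟩) <;>
      simp only [Pi.neg_apply, pre_neg, neg_lt_neg_iff] at ha hb hp hc ⊢
    · linarith
    · linarith
    · intro k hk1 hk2; have := hp k hk1 hk2; linarith
    · linarith
  · refine Or.inl ⟨i, j, hij, ?_, ?_, ?_, ?_⟩ <;>
      simp only [Pi.neg_apply, pre_neg, neg_lt_neg_iff] at ha hb hp hc ⊢
    · linarith
    · linarith
    · intro k hk1 hk2; have := hp k hk1 hk2; linarith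
    · linarith
  · refine Or.inr (Or.inr (Or.inr ⟨i, ?_, ?_, ?_⟩)) <;>
      simp only [Pi.neg_apply, pre_neg] at ha hp hc ⊢
    · linarith
    · intro k hk; have := hp k hk; linarith
    · linarith
  · refine Or.inr (Or.inr (Or.inl ⟨i, ?_, ?_, ?_⟩)) <;>
      simp only [Pi.neg_apply, pre_neg] at ha hp hc ⊢
    · linarith
    · intro k hk; have := hp k hk; linarith
    · linarith

lemma sum_update' (f : Fin n → ℝ) (s : Finset (Fin n)) (i : Fin n) (a : ℝ) :
    ∑ m ∈ s, Function.update f i a m = (∑ m ∈ s, f m) + (if i ∈ s then a - f i else 0) := by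
  by_cases hi : i ∈ s
  · rw [Finset.sum_update_of_mem hi, if_pos hi]
    rw [Finset.sum_eq_sum_sdiff_singleton_add hi f]
    ring
  · rw [if_neg hi, add_zero]
    refine Finset.sum_congr rfl fun m hm => Function.update_of_ne ?_ _ _
    rintro rfl; exact hi hm


lemma single_le_pre {z : Fin n → ℝ} {i k : Fin n} (hik : i ≤ k)
    (hnn : ∀ m, m ≤ k → 0 ≤ z m) : z i ≤ pre z k :=
  Finset.single_le_sum (fun m hm => hnn m (Finset.mem_Iic.mp hm)) (Finset.mem_Iic.mpr hik)


lemma step (c z : Fin n → ℝ) (i₀ : Fin n) (hpos : 0 < z i₀) (hmin : ∀ k, k < i₀ → z k = 0)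
    (hsum : ∑ m, c m * z m < 0) :
    P c z ∨ ∃ w : Fin n → ℝ,
      (univ.filter fun k => w k ≠ 0).card < (univ.filter fun k => z k ≠ 0).card ∧
      (∑ m, c m * w m < 0) ∧ Sub w z := by
  classical
  set N : Finset (Fin n) := univ.filter (fun k => i₀ < k ∧ z k < 0) with hN
  by_cases hNne : N.Nonempty
  · -- there is a negative coordinate after i₀
    set j := N.min' hNne with hj
    have hjmem : i₀ < j ∧ z j < 0 := by
      have := N.min'_mem hNne
      simp only [hN, Finset.mem_filter] at this
      exact this.2
    have hij : i₀ < j := hjmem.1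
    have hzj : z j < 0 := hjmem.2
    have hij' : i₀ ≠ j := ne_of_lt hij
    have hjleast : ∀ k, i₀ < k → z k < 0 → j ≤ k := by
      intro k h1 h2
      exact N.min'_le k (by rw [hN, Finset.mem_filter]; exact ⟨Finset.mem_univ k, h1, h2⟩)
    have hnonneg : ∀ m, m < j → 0 ≤ z m := by
      intro m hm
      rcases lt_trichotomy m i₀ with h | h | h
      · exact le_of_eq (hmin m h).symm
      · subst h; exact hpos.le
      · by_contra hcon
        push_neg at hcon
        exact absurd (hjleast m h hcon) (not_le.mpr hm)
    have hprepos : ∀ k, i₀ ≤ k → k < j → z i₀ ≤ pre z k := by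
      intro k h1 h2
      exact single_le_pre h1 (fun m hm => hnonneg m (lt_of_le_of_lt hm h2))
    by_cases hcc : c i₀ < c j
    · exact Or.inl (Or.inl ⟨i₀, j, hij, hpos, hzj, fun k h1 h2 =>
        lt_of_lt_of_le hpos (hprepos k h1 h2), hcc⟩)
    · push_neg at hcc
      set l : ℝ := min (z i₀) (-z j) with hl
      have hl0 : 0 < l := lt_min hpos (by linarith)
      have hli : l ≤ z i₀ := min_le_left _ _
      have hlj : l ≤ -z j := min_le_right _ _
      set w := Function.update (Function.update z i₀ (z i₀ - l)) j (z j + l) with hw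
      have hwi : w i₀ = z i₀ - l := by
        rw [hw, Function.update_of_ne hij', Function.update_self]
      have hwj : w j = z j + l := by rw [hw, Function.update_self]
      have hwk : ∀ k, k ≠ i₀ → k ≠ j → w k = z k := by
        intro k h1 h2
        rw [hw, Function.update_of_ne h2, Function.update_of_ne h1]
      have hprew : ∀ k, pre w k =
          pre z k + (if i₀ ∈ Finset.Iic k then -l else 0) + (if j ∈ Finset.Iic k then l else 0) := by
        intro k
        show (∑ m ∈ Finset.Iic k, w m) = _
        rw [hw, sum_update' _ _ j _, sum_update' z _ i₀ _,
          Function.update_of_ne (Ne.symm hij')]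
        show _ = pre z k + _ + _
        unfold pre
        split_ifs <;> ring
      have hcost : ∑ m, c m * w m < 0 := by
        have heq : (fun m => c m * w m) =
            Function.update (Function.update (fun m => c m * z m) i₀ (c i₀ * (z i₀ - l))) j
              (c j * (z j + l)) := by
          funext m
          by_cases h1 : m = j
          · subst h1; rw [hwj, Function.update_self]
          · by_cases h2 : m = i₀
            · subst h2
              rw [hwi, Function.update_of_ne h1, Function.update_self]
            · rw [hwk m h2 h1, Function.update_of_ne h1, Function.update_of_ne h2]
        calc ∑ m, c m * w m
            = (∑ m, c m * z m) - l * (c i₀ - c j) := by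
              rw [heq, sum_update' _ _ j _, sum_update' _ _ i₀ _,
                Function.update_of_ne (Ne.symm hij')]
              simp only [Finset.mem_univ, if_true]
              ring
          _ < 0 := by nlinarith [mul_nonneg hl0.le (sub_nonneg.mpr hcc)]
      have hsubset : (univ.filter fun k => w k ≠ 0) ⊆ (univ.filter fun k => z k ≠ 0) := by
        intro k hk
        rw [Finset.mem_filter] at hk ⊢
        refine ⟨Finset.mem_univ k, ?_⟩
        by_cases h1 : k = i₀
        · subst h1; exact ne_of_gt hpos
        · by_cases h2 : k = j
          · subst h2; exact ne_of_lt hzj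
          · rw [← hwk k h1 h2]; exact hk.2
      have hcard : (univ.filter fun k => w k ≠ 0).card < (univ.filter fun k => z k ≠ 0).card := by
        rcases le_total (z i₀) (-z j) with h | h
        · have hl' : l = z i₀ := min_eq_left h
          refine Finset.card_lt_card ⟨hsubset, fun hsub' => ?_⟩
          have : i₀ ∈ (univ.filter fun k => z k ≠ 0) :=
            Finset.mem_filter.mpr ⟨Finset.mem_univ _, ne_of_gt hpos⟩
          have := hsub' this
          rw [Finset.mem_filter] at this
          exact this.2 (by rw [hwi, hl']; ring)
        · have hl' : l = -z j := min_eq_right h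
          refine Finset.card_lt_card ⟨hsubset, fun hsub' => ?_⟩
          have : j ∈ (univ.filter fun k => z k ≠ 0) :=
            Finset.mem_filter.mpr ⟨Finset.mem_univ _, ne_of_lt hzj⟩
          have := hsub' this
          rw [Finset.mem_filter] at this
          exact this.2 (by rw [hwj, hl']; ring)
      refine Or.inr ⟨w, hcard, hcost, ?_, ?_, ?_, ?_⟩
      · intro k hk
        by_cases h1 : k = i₀
        · subst h1; exact hpos
        · by_cases h2 : k = j
          · subst h2; rw [hwj] at hk; linarith
          · rwa [← hwk k h1 h2]
      · intro k hk
        by_cases h1 : k = i₀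
        · subst h1; rw [hwi] at hk; linarith
        · by_cases h2 : k = j
          · subst h2; exact hzj
          · rwa [← hwk k h1 h2]
      · intro k hk
        rw [hprew k] at hk
        split_ifs at hk with h1 h2 h2
        · linarith
        · linarith
        · exact absurd (Finset.mem_Iic.mpr (le_of_lt (lt_of_lt_of_le hij
            (Finset.mem_Iic.mp h2)))) h1
        · linarith
      · intro k hk
        rw [hprew k] at hk
        split_ifs at hk with h1 h2 h2
        · linarith
        · -- i₀ ≤ k < j : pre z k ≥ z i₀ ≥ l, contradiction
          exfalso
          have hik : i₀ ≤ k := Finset.mem_Iic.mp h1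
          have hkj : k < j := not_le.mp (fun h => h2 (Finset.mem_Iic.mpr h))
          have := hprepos k hik hkj
          linarith
        · exact absurd (Finset.mem_Iic.mpr (le_of_lt (lt_of_lt_of_le hij
            (Finset.mem_Iic.mp h2)))) h1
        · linarith
  · -- no negative coordinate after i₀ : everything nonnegative
    have hnn : ∀ m, 0 ≤ z m := by
      intro m
      rcases lt_trichotomy m i₀ with h | h | h
      · exact le_of_eq (hmin m h).symm
      · subst h; exact hpos.le
      · by_contra hcon
        push_neg at hcon
        exact hNne ⟨m, by rw [hN, Finset.mem_filter]; exact ⟨Finset.mem_univ m, h, hcon⟩⟩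
    have hprepos : ∀ k, i₀ ≤ k → 0 < pre z k := fun k hk =>
      lt_of_lt_of_le hpos (single_le_pre hk (fun m _ => hnn m))
    by_cases hc0 : c i₀ < 0
    · exact Or.inl (Or.inr (Or.inr (Or.inl ⟨i₀, hpos, hprepos, hc0⟩)))
    · push_neg at hc0
      set w := Function.update z i₀ 0 with hw
      have hwi : w i₀ = 0 := by rw [hw, Function.update_self]
      have hwk : ∀ k, k ≠ i₀ → w k = z k := fun k h => by rw [hw, Function.update_of_ne h]
      have hwnn : ∀ m, 0 ≤ w m := by
        intro m
        by_cases h : m = i₀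
        · subst h; rw [hwi]
        · rw [hwk m h]; exact hnn m
      have hwle : ∀ m, w m ≤ z m := by
        intro m
        by_cases h : m = i₀
        · subst h; rw [hwi]; exact hpos.le
        · rw [hwk m h]
      have hcost : ∑ m, c m * w m < 0 := by
        have heq : (fun m => c m * w m) =
            Function.update (fun m => c m * z m) i₀ (c i₀ * 0) := by
          funext m
          by_cases h : m = i₀
          · subst h; rw [hwi, Function.update_self]
          · rw [hwk m h, Function.update_of_ne h]
        calc ∑ m, c m * w m = (∑ m, c m * z m) - c i₀ * z i₀ := by
              rw [heq, sum_update' _ _ i₀ _]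
              simp only [Finset.mem_univ, if_true]
              ring
          _ < 0 := by nlinarith [mul_nonneg hc0 hpos.le]
      have hsubset : (univ.filter fun k => w k ≠ 0) ⊆ (univ.filter fun k => z k ≠ 0) := by
        intro k hk
        rw [Finset.mem_filter] at hk ⊢
        refine ⟨Finset.mem_univ k, ?_⟩
        by_cases h : k = i₀
        · subst h; exact ne_of_gt hpos
        · rw [← hwk k h]; exact hk.2
      have hcard : (univ.filter fun k => w k ≠ 0).card < (univ.filter fun k => z k ≠ 0).card := by
        refine Finset.card_lt_card ⟨hsubset, fun hsub' => ?_⟩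
        have : i₀ ∈ (univ.filter fun k => z k ≠ 0) :=
          Finset.mem_filter.mpr ⟨Finset.mem_univ _, ne_of_gt hpos⟩
        have := hsub' this
        rw [Finset.mem_filter] at this
        exact this.2 hwi
      refine Or.inr ⟨w, hcard, hcost, ?_, ?_, ?_, ?_⟩
      · intro k hk
        by_cases h : k = i₀
        · subst h; exact hpos
        · rwa [← hwk k h]
      · intro k hk
        exact absurd hk (not_lt.mpr (hwnn k))
      · intro k hk
        have : pre w k ≤ pre z k := Finset.sum_le_sum (fun m _ => hwle m)
        linarith
      · intro k hk
        have : 0 ≤ pre w k := Finset.sum_nonneg (fun m _ => hwnn m)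
        linarith

lemma key : ∀ m : ℕ, ∀ c z : Fin n → ℝ,
    (univ.filter fun k => z k ≠ 0).card ≤ m → (∑ i, c i * z i) < 0 → P c z := by
  intro m
  induction m using Nat.strong_induction_on with
  | _ m ih =>
    intro c z hcard hsum
    have hne : (univ.filter fun k => z k ≠ 0).Nonempty := by
      by_contra h
      rw [Finset.not_nonempty_iff_eq_empty] at h
      have hz : ∀ k, z k = 0 := by
        intro k
        by_contra hk
        have hmem : k ∈ univ.filter fun k => z k ≠ 0 :=
          Finset.mem_filter.mpr ⟨Finset.mem_univ k, hk⟩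
        rw [h] at hmem
        exact absurd hmem (Finset.notMem_empty k)
      have : ∑ i, c i * z i = 0 := Finset.sum_eq_zero fun i _ => by rw [hz i, mul_zero]
      linarith
    set i₀ := (univ.filter fun k => z k ≠ 0).min' hne with hi₀def
    have hi₀ : z i₀ ≠ 0 := by
      have := (univ.filter fun k => z k ≠ 0).min'_mem hne
      simp only [Finset.mem_filter] at this
      exact this.2
    have hmin : ∀ k, k < i₀ → z k = 0 := by
      intro k hk
      by_contra hkne
      have : i₀ ≤ k := Finset.min'_le _ k (Finset.mem_filter.mpr ⟨Finset.mem_univ k, hkne⟩)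
      exact absurd this (not_le.mpr hk)
    rcases hi₀.lt_or_gt with hneg | hpos
    · -- first nonzero coordinate negative : use the negation trick
      have hsum' : ∑ i, (-c) i * (-z) i < 0 := by
        have : ∀ i, (-c) i * (-z) i = c i * z i := fun i => by simp
        rw [Finset.sum_congr rfl fun i _ => this i]
        exact hsum
      have hstep := step (-c) (-z) i₀ (by simpa using hneg)
        (fun k hk => by simp [hmin k hk]) hsum'
      rcases hstep with h | ⟨w, hcard', hsum'', hsub⟩
      · exact P_neg h
      · have hceq : (univ.filter fun k => (-z) k ≠ 0) = (univ.filter fun k => z k ≠ 0) := by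
          apply Finset.filter_congr
          intro k _
          simp
        rw [hceq] at hcard'
        have hlt : (univ.filter fun k => w k ≠ 0).card < m := lt_of_lt_of_le hcard' hcard
        exact P_neg (P_sub hsub (ih _ hlt (-c) w le_rfl hsum''))
    · have hstep := step c z i₀ hpos hmin hsum
      rcases hstep with h | ⟨w, hcard', hsum'', hsub⟩
      · exact h
      · have hlt : (univ.filter fun k => w k ≠ 0).card < m := lt_of_lt_of_le hcard' hcard
        exact P_sub hsub (ih _ hlt c w le_rfl hsum'')

lemma move2 {a b u x : Fin n → ℝ} (hx : feasible n a b u x) (i j : Fin n) (hij : i < j)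
    (δ : ℝ)
    (h1 : 0 ≤ x i + δ) (h2 : x i + δ ≤ u i) (h3 : 0 ≤ x j - δ) (h4 : x j - δ ≤ u j)
    (h5 : ∀ k, i ≤ k → k < j →
      a k ≤ (∑ m ∈ Finset.Iic k, x m) + δ ∧ (∑ m ∈ Finset.Iic k, x m) + δ ≤ b k) :
    feasible n a b u (Function.update (Function.update x i (x i + δ)) j (x j - δ)) ∧
    ∀ c : Fin n → ℝ,
      (∑ m, c m * Function.update (Function.update x i (x i + δ)) j (x j - δ) m)
        = (∑ m, c m * x m) + δ * (c i - c j) := by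
  have hij' : i ≠ j := ne_of_lt hij
  set w := Function.update (Function.update x i (x i + δ)) j (x j - δ) with hw
  have hwi : w i = x i + δ := by
    rw [hw, Function.update_of_ne hij', Function.update_self]
  have hwj : w j = x j - δ := by rw [hw, Function.update_self]
  have hwk : ∀ k, k ≠ i → k ≠ j → w k = x k := by
    intro k ha hb
    rw [hw, Function.update_of_ne hb, Function.update_of_ne ha]
  have hprew : ∀ k, (∑ m ∈ Finset.Iic k, w m) =
      (∑ m ∈ Finset.Iic k, x m) + (if i ∈ Finset.Iic k then δ else 0)
        + (if j ∈ Finset.Iic k then -δ else 0) := by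
    intro k
    rw [hw, sum_update' _ _ j _, sum_update' x _ i _,
      Function.update_of_ne (Ne.symm hij')]
    split_ifs <;> ring
  constructor
  · constructor
    · intro k
      by_cases ha : k = i
      · subst ha; rw [hwi]; exact ⟨h1, h2⟩
      · by_cases hb : k = j
        · subst hb; rw [hwj]; exact ⟨h3, h4⟩
        · rw [hwk k ha hb]; exact hx.1 k
    · intro k
      rw [hprew k]
      split_ifs with ha hb hb
      · have := hx.2 k; constructor <;> linarith
      · have hik : i ≤ k := Finset.mem_Iic.mp ha
        have hkj : k < j := not_le.mp (fun h => hb (Finset.mem_Iic.mpr h))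
        have := h5 k hik hkj
        constructor <;> linarith
      · exact absurd (Finset.mem_Iic.mpr (le_of_lt
          (lt_of_lt_of_le hij (Finset.mem_Iic.mp hb)))) ha
      · have := hx.2 k; constructor <;> linarith
  · intro c
    have heq : (fun m => c m * w m) =
        Function.update (Function.update (fun m => c m * x m) i (c i * (x i + δ))) j
          (c j * (x j - δ)) := by
      funext m
      by_cases ha : m = j
      · subst ha; rw [hwj, Function.update_self]
      · by_cases hb : m = i
        · subst hb; rw [hwi, Function.update_of_ne ha, Function.update_self]
        · rw [hwk m hb ha, Function.update_of_ne ha, Function.update_of_ne hb]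
    rw [show (∑ m, c m * w m) = ∑ m, (fun m => c m * w m) m from rfl, heq,
      sum_update' _ _ j _, sum_update' _ _ i _, Function.update_of_ne (Ne.symm hij')]
    simp only [Finset.mem_univ, if_true]
    ring

lemma move1 {a b u x : Fin n → ℝ} (hx : feasible n a b u x) (i : Fin n) (δ : ℝ)
    (h1 : 0 ≤ x i + δ) (h2 : x i + δ ≤ u i)
    (h5 : ∀ k, i ≤ k →
      a k ≤ (∑ m ∈ Finset.Iic k, x m) + δ ∧ (∑ m ∈ Finset.Iic k, x m) + δ ≤ b k) :
    feasible n a b u (Function.update x i (x i + δ)) ∧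
    ∀ c : Fin n → ℝ,
      (∑ m, c m * Function.update x i (x i + δ) m) = (∑ m, c m * x m) + δ * c i := by
  set w := Function.update x i (x i + δ) with hw
  have hwi : w i = x i + δ := by rw [hw, Function.update_self]
  have hwk : ∀ k, k ≠ i → w k = x k := fun k h => by rw [hw, Function.update_of_ne h]
  have hprew : ∀ k, (∑ m ∈ Finset.Iic k, w m) =
      (∑ m ∈ Finset.Iic k, x m) + (if i ∈ Finset.Iic k then δ else 0) := by
    intro k
    rw [hw, sum_update' x _ i _]
    split_ifs <;> ring
  constructor
  · constructor
    · intro k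
      by_cases ha : k = i
      · subst ha; rw [hwi]; exact ⟨h1, h2⟩
      · rw [hwk k ha]; exact hx.1 k
    · intro k
      rw [hprew k]
      split_ifs with ha
      · exact h5 k (Finset.mem_Iic.mp ha)
      · have := hx.2 k; constructor <;> linarith
  · intro c
    have heq : (fun m => c m * w m) =
        Function.update (fun m => c m * x m) i (c i * (x i + δ)) := by
      funext m
      by_cases ha : m = i
      · subst ha; rw [hwi, Function.update_self]
      · rw [hwk m ha, Function.update_of_ne ha]
    rw [show (∑ m, c m * w m) = ∑ m, (fun m => c m * w m) m from rfl, heq,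
      sum_update' _ _ i _]
    simp only [Finset.mem_univ, if_true]
    ring

lemma oneDir (a b u c c' : Fin n → ℝ)
    (hc0 : ∀ i, c i ≠ 0)
    (horder : ∀ i j, c i < c j ↔ c' i < c' j)
    (hsign : ∀ i, 0 < c i ↔ 0 < c' i)
    (x : Fin n → ℝ) (hx : isSolution n a b c u x) : isSolution n a b c' u x := by
  refine ⟨hx.1, fun y hy => ?_⟩
  by_contra hcon
  push_neg at hcon
  set z : Fin n → ℝ := fun k => y k - x k with hz
  have hzsum : ∑ i, c' i * z i < 0 := by
    have : ∀ i : Fin n, c' i * z i = c' i * y i - c' i * x i := fun i => by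
      rw [hz]; ring
    rw [Finset.sum_congr rfl fun i _ => this i, Finset.sum_sub_distrib]
    linarith
  have hprez : ∀ k, pre z k = (∑ m ∈ Finset.Iic k, y m) - (∑ m ∈ Finset.Iic k, x m) := by
    intro k
    unfold pre
    rw [hz, Finset.sum_sub_distrib]
  have hP := key ((univ.filter fun k => z k ≠ 0).card) c' z le_rfl hzsum
  rcases hP with ⟨i, j, hij, hzi, hzj, hp, hc'⟩ | ⟨i, j, hij, hzi, hzj, hp, hc'⟩ |
    ⟨i, hzi, hp, hc'⟩ | ⟨i, hzi, hp, hc'⟩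
  · -- shift mass from j back to i : 0 < z i, z j < 0, prefixes positive on [i,j)
    have hc : c i < c j := (horder i j).mpr hc'
    have hne : (Finset.Ico i j).Nonempty := ⟨i, Finset.mem_Ico.mpr ⟨le_refl i, hij⟩⟩
    set ε := min (min (z i) (-z j)) ((Finset.Ico i j).inf' hne (fun k => pre z k)) with hε
    have hε0 : 0 < ε := by
      refine lt_min (lt_min hzi (by linarith)) ((Finset.lt_inf'_iff hne).mpr ?_)
      intro k hk
      rw [Finset.mem_Ico] at hk
      exact hp k hk.1 hk.2
    have hεi : ε ≤ z i := le_trans (min_le_left _ _) (min_le_left _ _)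
    have hεj : ε ≤ -z j := le_trans (min_le_left _ _) (min_le_right _ _)
    have hεp : ∀ k, i ≤ k → k < j → ε ≤ pre z k := fun k h1 h2 =>
      le_trans (min_le_right _ _) (Finset.inf'_le _ (Finset.mem_Ico.mpr ⟨h1, h2⟩))
    have hzi' : z i = y i - x i := by rw [hz]
    have hzj' : z j = y j - x j := by rw [hz]
    obtain ⟨hwfeas, hwcost⟩ := move2 hx.1 i j hij ε
      (by have := (hx.1.1 i).1; linarith)
      (by have := (hy.1 i).2; rw [hzi'] at hεi; linarith)
      (by have := (hy.1 j).1; rw [hzj'] at hεj; linarith)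
      (by have := (hx.1.1 j).2; linarith)
      (by
        intro k h1 h2
        have ha := (hx.1.2 k).1
        have hb := (hy.2 k).2
        have hc2 := hεp k h1 h2
        rw [hprez k] at hc2
        constructor <;> linarith)
    have hle := hx.2 _ hwfeas
    rw [hwcost c] at hle
    nlinarith [mul_pos hε0 (sub_pos.mpr hc)]
  · -- shift mass from i forward to j : z i < 0, 0 < z j, prefixes negative on [i,j)
    have hc : c j < c i := (horder j i).mpr hc'
    have hne : (Finset.Ico i j).Nonempty := ⟨i, Finset.mem_Ico.mpr ⟨le_refl i, hij⟩⟩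
    set ε := min (min (-z i) (z j)) ((Finset.Ico i j).inf' hne (fun k => -pre z k)) with hε
    have hε0 : 0 < ε := by
      refine lt_min (lt_min (by linarith) hzj) ((Finset.lt_inf'_iff hne).mpr ?_)
      intro k hk
      rw [Finset.mem_Ico] at hk
      have := hp k hk.1 hk.2
      linarith
    have hεi : ε ≤ -z i := le_trans (min_le_left _ _) (min_le_left _ _)
    have hεj : ε ≤ z j := le_trans (min_le_left _ _) (min_le_right _ _)
    have hεp : ∀ k, i ≤ k → k < j → ε ≤ -pre z k := fun k h1 h2 =>
      le_trans (min_le_right _ _) (Finset.inf'_le _ (Finset.mem_Ico.mpr ⟨h1, h2⟩))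
    have hzi' : z i = y i - x i := by rw [hz]
    have hzj' : z j = y j - x j := by rw [hz]
    obtain ⟨hwfeas, hwcost⟩ := move2 hx.1 i j hij (-ε)
      (by have := (hy.1 i).1; rw [hzi'] at hεi; linarith)
      (by have := (hx.1.1 i).2; linarith)
      (by have := (hx.1.1 j).1; linarith)
      (by have := (hy.1 j).2; rw [hzj'] at hεj; linarith)
      (by
        intro k h1 h2
        have ha := (hy.2 k).1
        have hb := (hx.1.2 k).2
        have hc2 := hεp k h1 h2
        rw [hprez k] at hc2
        constructor <;> linarith)
    have hle := hx.2 _ hwfeas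
    rw [hwcost c] at hle
    nlinarith [mul_pos hε0 (sub_pos.mpr hc)]
  · -- increase x i : 0 < z i, all later prefixes positive, c i < 0
    have hc : c i < 0 := by
      have h1 : ¬ 0 < c i := fun h => absurd ((hsign i).mp h) (by linarith)
      rcases lt_or_eq_of_le (not_lt.mp h1) with h | h
      · exact h
      · exact absurd h (hc0 i)
    have hne : (Finset.Ici i).Nonempty := ⟨i, Finset.mem_Ici.mpr le_rfl⟩
    set ε := min (z i) ((Finset.Ici i).inf' hne (fun k => pre z k)) with hε
    have hε0 : 0 < ε := by
      refine lt_min hzi ((Finset.lt_inf'_iff hne).mpr ?_)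
      intro k hk
      exact hp k (Finset.mem_Ici.mp hk)
    have hεi : ε ≤ z i := min_le_left _ _
    have hεp : ∀ k, i ≤ k → ε ≤ pre z k := fun k h1 =>
      le_trans (min_le_right _ _) (Finset.inf'_le _ (Finset.mem_Ici.mpr h1))
    have hzi' : z i = y i - x i := by rw [hz]
    obtain ⟨hwfeas, hwcost⟩ := move1 hx.1 i ε
      (by have := (hx.1.1 i).1; linarith)
      (by have := (hy.1 i).2; rw [hzi'] at hεi; linarith)
      (by
        intro k h1
        have ha := (hx.1.2 k).1
        have hb := (hy.2 k).2
        have hc2 := hεp k h1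
        rw [hprez k] at hc2
        constructor <;> linarith)
    have hle := hx.2 _ hwfeas
    rw [hwcost c] at hle
    nlinarith [mul_pos hε0 (neg_pos.mpr hc)]
  · -- decrease x i : z i < 0, all later prefixes negative, 0 < c i
    have hc : 0 < c i := (hsign i).mpr hc'
    have hne : (Finset.Ici i).Nonempty := ⟨i, Finset.mem_Ici.mpr le_rfl⟩
    set ε := min (-z i) ((Finset.Ici i).inf' hne (fun k => -pre z k)) with hε
    have hε0 : 0 < ε := by
      refine lt_min (by linarith) ((Finset.lt_inf'_iff hne).mpr ?_)
      intro k hk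
      have := hp k (Finset.mem_Ici.mp hk)
      linarith
    have hεi : ε ≤ -z i := min_le_left _ _
    have hεp : ∀ k, i ≤ k → ε ≤ -pre z k := fun k h1 =>
      le_trans (min_le_right _ _) (Finset.inf'_le _ (Finset.mem_Ici.mpr h1))
    have hzi' : z i = y i - x i := by rw [hz]
    obtain ⟨hwfeas, hwcost⟩ := move1 hx.1 i (-ε)
      (by have := (hy.1 i).1; rw [hzi'] at hεi; linarith)
      (by have := (hx.1.1 i).2; linarith)
      (by
        intro k h1
        have ha := (hy.2 k).1
        have hb := (hx.1.2 k).2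
        have hc2 := hεp k h1
        rw [hprez k] at hc2
        constructor <;> linarith)
    have hle := hx.2 _ hwfeas
    rw [hwcost c] at hle
    nlinarith [mul_pos hε0 hc]

end StorageLP

theorem solution_depends_only_on_order_and_signs
    (n : ℕ) (a b u c c' : Fin n → ℝ)
    (hu : ∀ i, 0 ≤ u i) (hab : ∀ i, a i ≤ b i)
    (hfeas : ∃ x, feasible n a b u x)
    (hcinj : Function.Injective c) (hc0 : ∀ i, c i ≠ 0)
    (hc'inj : Function.Injective c') (hc'0 : ∀ i, c' i ≠ 0)
    (horder : ∀ i j, c i < c j ↔ c' i < c' j)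
    (hsign : ∀ i, 0 < c i ↔ 0 < c' i) :
    ∀ x, isSolution n a b c u x ↔ isSolution n a b c' u x := by
  intro x
  constructor
  · exact StorageLP.oneDir a b u c c' hc0 horder hsign x
  · exact StorageLP.oneDir a b u c' c hc'0 (fun i j => (horder i j).symm)
      (fun i => (hsign i).symm) x
end
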